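/- arXiv:1801.02871 — 5 statements merged into one kernel-verified Lean document; each statement's English description precedes it below -/
import Mathlib

section
/- Let r ≥ 0, n ≥ 1, and let ν be a finite Borel measure on ℝ^d with support contained in the closed ball B_r = [-r,r]^d (for the sup norm) and total mass |ν| ≥ 1/n. Then there exists a Borel subset A of B_r such that ν(A) ≥ 1/n and Diam(A) ≤ 4r(n|ν|)^{-1/d}. -/
open MeasureTheory Metric
open scoped ENNReal NNReal

/-!
With `t = n |ν| ≥ 1` and `m = ⌊t ^ (1/d)⌋₊ ≥ 1`, cut `B_r` into the `m ^ d` closed grid cubes of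
side `2r / m`. Since `m ^ d ≤ t`, the total mass `|ν| ≥ m ^ d / n` forces, by pigeonhole, some cube
to carry mass at least `1 / n`; its diameter is `2r / m ≤ 4r t ^ (-1/d)` because
`t ^ (1/d) < m + 1 ≤ 2m`.
-/

theorem Set.Icc_subset_iUnion_Icc_add_mul {a s : ℝ} (hs : 0 ≤ s) {m : ℕ} (hm : m ≠ 0) :
    Set.Icc a (a + m * s) ⊆ ⋃ j : Fin m, Set.Icc (a + j * s) (a + (j + 1) * s) := by
  rintro y ⟨hay, hya⟩
  rcases hs.eq_or_lt with rfl | hs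
  · refine Set.mem_iUnion.2 ⟨⟨0, Nat.pos_of_ne_zero hm⟩, ?_⟩
    simp only [mul_zero, add_zero] at hya ⊢
    exact ⟨hay, hya⟩
  set q := (y - a) / s
  have hq : 0 ≤ q := div_nonneg (sub_nonneg.2 hay) hs.le
  have hqm : q ≤ m := by rw [div_le_iff₀ hs]; linarith
  obtain ⟨j, hjm, hjq, hqj⟩ : ∃ j : ℕ, j < m ∧ (j : ℝ) ≤ q ∧ q ≤ j + 1 := by
    rcases lt_or_ge ⌊q⌋₊ m with h | h
    · exact ⟨⌊q⌋₊, h, Nat.floor_le hq, (Nat.lt_floor_add_one q).le⟩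
    · refine ⟨m - 1, by omega, ?_, by simpa [Nat.cast_sub (Nat.one_le_iff_ne_zero.2 hm)]⟩
      exact (Nat.cast_le.2 (by omega)).trans (Nat.floor_le hq)
  rw [le_div_iff₀ hs] at hjq
  rw [div_le_iff₀ hs] at hqj
  exact Set.mem_iUnion.2 ⟨⟨j, hjm⟩, by constructor <;> dsimp only <;> linarith⟩

section GridCube

variable {ι : Type*}

def gridCube (a s : ℝ) (k : ι → ℕ) : Set (ι → ℝ) :=
  Set.univ.pi fun i => Set.Icc (a + k i * s) (a + (k i + 1) * s)

theorem measurableSet_gridCube [Countable ι] (a s : ℝ) (k : ι → ℕ) :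
    MeasurableSet (gridCube a s k) :=
  .univ_pi fun _ => measurableSet_Icc

theorem diam_gridCube_le [Fintype ι] {s : ℝ} (hs : 0 ≤ s) (a : ℝ) (k : ι → ℕ) :
    diam (gridCube a s k) ≤ s := by
  refine diam_le_of_forall_dist_le hs fun x hx y hy => (dist_pi_le_iff hs).2 fun i => ?_
  have := Real.dist_le_of_mem_Icc (hx i trivial) (hy i trivial)
  linarith

theorem gridCube_subset_pi_Icc {a s : ℝ} (hs : 0 ≤ s) {m : ℕ} {k : ι → ℕ} (hk : ∀ i, k i < m) :
    gridCube a s k ⊆ Set.univ.pi fun _ => Set.Icc a (a + m * s) := by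
  refine Set.pi_mono fun i _ => Set.Icc_subset_Icc ?_ ?_
  · have : 0 ≤ (k i : ℝ) * s := by positivity
    linarith
  · have : ((k i : ℝ) + 1) * s ≤ m * s := by gcongr; exact_mod_cast hk i
    linarith

theorem pi_Icc_subset_iUnion_gridCube {a s : ℝ} (hs : 0 ≤ s) {m : ℕ} (hm : m ≠ 0) :
    Set.univ.pi (fun _ : ι => Set.Icc a (a + m * s)) ⊆
      ⋃ k : ι → Fin m, gridCube a s fun i => k i := by
  intro x hx
  choose k hk using fun i =>
    Set.mem_iUnion.1 (Set.Icc_subset_iUnion_Icc_add_mul hs hm (hx i trivial))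
  exact Set.mem_iUnion.2 ⟨k, fun i _ => hk i⟩

end GridCube

theorem MeasureTheory.exists_le_measure_of_subset_iUnion {α ι : Type*} [MeasurableSpace α]
    [Fintype ι] [Nonempty ι] (μ : Measure α) {s : Set α} {C : ι → Set α} (hs : s ⊆ ⋃ i, C i)
    {c : ℝ≥0∞} (hc : Fintype.card ι * c ≤ μ s) : ∃ i, c ≤ μ (C i) := by
  obtain ⟨i, -, hi⟩ := ENNReal.exists_le_of_sum_le (s := Finset.univ) (f := fun _ => c)
    (g := fun i => μ (C i)) Finset.univ_nonempty <| calc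
      ∑ _i : ι, c = Fintype.card ι * c := by simp [Finset.sum_const, nsmul_eq_mul]
      _ ≤ μ s := hc
      _ ≤ μ (⋃ i, C i) := measure_mono hs
      _ ≤ ∑ i, μ (C i) := measure_iUnion_fintype_le μ C
  exact ⟨i, hi⟩

theorem exists_nat_pow_le_inv_le_two_mul_rpow {t : ℝ} (ht : 1 ≤ t) (d : ℕ) :
    ∃ m : ℕ, m ≠ 0 ∧ (m : ℝ) ^ d ≤ t ∧ (m : ℝ)⁻¹ ≤ 2 * t ^ (-(1 : ℝ) / d) := by
  set u := t ^ ((1 : ℝ) / d)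
  have hu : 1 ≤ u := Real.one_le_rpow ht (by positivity)
  have hm : 1 ≤ ⌊u⌋₊ := Nat.le_floor (by exact_mod_cast hu)
  have hm' : (1 : ℝ) ≤ ⌊u⌋₊ := by exact_mod_cast hm
  refine ⟨⌊u⌋₊, by omega, ?_, ?_⟩
  · rcases eq_or_ne d 0 with rfl | hd
    · simpa using ht
    calc (⌊u⌋₊ : ℝ) ^ d ≤ u ^ d := by gcongr; exact Nat.floor_le (by positivity)
      _ = t := by
        rw [← Real.rpow_natCast, ← Real.rpow_mul (by positivity), one_div,
          inv_mul_cancel₀ (by exact_mod_cast hd), Real.rpow_one]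
  · have hu2 : u ≤ 2 * ⌊u⌋₊ := by linarith [Nat.lt_floor_add_one u]
    rw [neg_div, Real.rpow_neg (by positivity), ← div_eq_mul_inv, le_div_iff₀ (by positivity),
      inv_mul_le_iff₀ (by positivity)]
    linarith

theorem uniform_mass_cube_general (d n : ℕ) (hn : 1 ≤ n) (r : ℝ) (hr : 0 ≤ r)
    (ν : Measure (Fin d → ℝ)) [IsFiniteMeasure ν]
    (hsupp : ν (closedBall 0 r)ᶜ = 0)
    (hmass : (n : ℝ≥0∞)⁻¹ ≤ ν Set.univ) :
    ∃ A : Set (Fin d → ℝ), MeasurableSet A ∧ A ⊆ closedBall 0 r ∧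
      (n : ℝ≥0∞)⁻¹ ≤ ν A ∧
      Metric.diam A ≤ 4 * r * ((n : ℝ) * (ν Set.univ).toReal) ^ (-(1 : ℝ) / d) := by
  have hn0 : (n : ℝ≥0∞) ≠ 0 := by exact_mod_cast (by omega : n ≠ 0)
  have hnν : (n : ℝ≥0∞) * ν Set.univ ≠ ∞ := by finiteness
  have ht : 1 ≤ (n : ℝ) * (ν Set.univ).toReal := by
    rw [ENNReal.inv_le_iff_le_mul (by simp) (by simp)] at hmass
    simpa using ENNReal.toReal_mono hnν hmass
  obtain ⟨m, hm0, hmt, hm_inv⟩ := exists_nat_pow_le_inv_le_two_mul_rpow ht d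
  set s := 2 * r / m
  have hs : 0 ≤ s := by positivity
  have hball : closedBall (0 : Fin d → ℝ) r = Set.univ.pi fun _ => Set.Icc (-r) (-r + m * s) := by
    rw [closedBall_pi _ hr]
    simp only [Pi.zero_apply, Real.closedBall_eq_Icc, s]
    field_simp
    ring_nf
  have hνball : ν (closedBall 0 r) = ν Set.univ := measure_congr (ae_eq_univ.2 hsupp)
  have hcard : (Fintype.card (Fin d → Fin m) : ℝ≥0∞) * (n : ℝ≥0∞)⁻¹ ≤ ν (closedBall 0 r) := by
    rw [hνball, ← div_eq_mul_inv]
    refine ENNReal.div_le_of_le_mul' ?_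
    rw [← ENNReal.ofReal_natCast, ENNReal.ofReal_le_iff_le_toReal hnν]
    simpa using hmt
  have : Nonempty (Fin m) := ⟨⟨0, Nat.pos_of_ne_zero hm0⟩⟩
  obtain ⟨k, hk⟩ := exists_le_measure_of_subset_iUnion ν
    (hball.trans_subset (pi_Icc_subset_iUnion_gridCube hs hm0)) hcard
  refine ⟨_, measurableSet_gridCube _ _ _,
    hball ▸ gridCube_subset_pi_Icc hs fun i => (k i).isLt, hk, ?_⟩
  calc diam (gridCube (-r) s fun i => k i) ≤ s := diam_gridCube_le hs _ _
    _ = 2 * r * (m : ℝ)⁻¹ := div_eq_mul_inv _ _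
    _ ≤ 2 * r * (2 * ((n : ℝ) * (ν Set.univ).toReal) ^ (-(1 : ℝ) / d)) := by gcongr
    _ = _ := by ring

theorem uniform_mass_cube (d n : ℕ) (hd : 1 ≤ d) (hn : 1 ≤ n) (r : ℝ) (hr : 0 ≤ r)
    (ν : Measure (Fin d → ℝ)) [IsFiniteMeasure ν]
    (hsupp : ν (closedBall 0 r)ᶜ = 0)
    (hmass : (n : ℝ≥0∞)⁻¹ ≤ ν Set.univ) :
    ∃ A : Set (Fin d → ℝ), MeasurableSet A ∧ A ⊆ closedBall 0 r ∧
      (n : ℝ≥0∞)⁻¹ ≤ ν A ∧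
      Metric.diam A ≤ 4 * r * ((n : ℝ) * (ν Set.univ).toReal) ^ (-(1 : ℝ) / d) :=
  uniform_mass_cube_general d n hn r hr ν hsupp hmass
end

section
/- Let r ≥ 0 and let ρ be a probability measure on ℝ^d supported in B_r = [-r,r]^d. For every n ≥ 1 and every p ≥ 1 with p < d, there exist points x_1,…,x_n ∈ ℝ^d such that the empirical measure μ^(n) = n^{-1} Σ_{k=1}^n δ_{x_k} satisfies W_p(μ^(n), ρ) ≤ 4r · (d/(d−p))^{1/p} · n^{-1/d}. -/
/-!
Cut `[-r, r]^d` dyadically and work bottom-up to depth `n`: every dyadic cube of level `ℓ`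
(radius `r / 2^ℓ`) collects what its `2^d` subcubes left over, carves as many pieces of
mass `1/n` out of it as it can, and passes the remainder, of mass `< 1/n`, to its parent.
Above the leaves a cube therefore carves fewer than `2^d` pieces, so fewer than `2^((ℓ+1)d)`
pieces live at levels `≤ ℓ`; listing the pieces by level, the `k`-th one lies in a ball of
radius `2r (k+1)^(-1/d)`. Sending each piece to the centre of its ball costs at most
`n⁻¹ ∑_{k<n} (2r (k+1)^(-1/d))^p`, and `∑_{k<n} (k+1)^(-p/d) ≤ n^(1-p/d) / (1 - p/d)`
because `p < d`.
-/

open MeasureTheory Metric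
open scoped ENNReal NNReal

/-- The `p`-th power Wasserstein transport cost between two measures of equal mass,
defined as the infimum over couplings of `∫ ‖x - y‖ ^ p`. -/
noncomputable def WpCost {d : ℕ} (p : ℝ) (μ ν : Measure (Fin d → ℝ)) : ℝ≥0∞ :=
  ⨅ (π : Measure ((Fin d → ℝ) × (Fin d → ℝ))) (_ : π.map Prod.fst = μ)
    (_ : π.map Prod.snd = ν), ∫⁻ q, ENNReal.ofReal (‖q.1 - q.2‖ ^ p) ∂π

open Finset

theorem Fintype.exists_equiv_fin_succ_le_card_le {ι α : Type*} [Fintype ι] [LinearOrder α]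
    (f : ι → α) {n : ℕ} (hn : Fintype.card ι = n) :
    ∃ e : Fin n ≃ ι, ∀ k : Fin n, (k : ℕ) + 1 ≤ #{i | f i ≤ f (e k)} := by
  let g := (Fintype.equivFinOfCardEq hn).symm
  let e := (Tuple.sort (f ∘ g)).trans g
  have he : Monotone (f ∘ e) := Tuple.monotone_sort (f ∘ g)
  refine ⟨e, fun k => ?_⟩
  calc (k : ℕ) + 1 = #((Iic k).map e.toEmbedding) := by simp
    _ ≤ #{i | f i ≤ f (e k)} := by
      refine card_le_card fun i hi => ?_
      obtain ⟨k', hk', rfl⟩ := mem_map.mp hi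
      simpa using he (mem_Iic.mp hk')

theorem ENNReal.eq_and_eq_zero_of_natCast_div_add_eq_one {m n : ℕ} {a : ℝ≥0∞} (hn : n ≠ 0)
    (h : m / n + a = 1) (ha : a < (n : ℝ≥0∞)⁻¹) : m = n ∧ a = 0 := by
  have ha_top : a ≠ ∞ := (ha.trans_le le_top).ne
  have hn' : (0 : ℝ) < n := by positivity
  have h' : (m : ℝ) / n + a.toReal = 1 := by
    have := congrArg ENNReal.toReal h
    rwa [ENNReal.toReal_add (ENNReal.div_ne_top (by simp) (by simpa using hn)) ha_top,
      ENNReal.toReal_div, ENNReal.toReal_natCast, ENNReal.toReal_natCast,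
      ENNReal.toReal_one] at this
  have hna : n * a.toReal < 1 := by
    have := (ENNReal.toReal_lt_toReal ha_top (by simpa using hn)).mpr ha
    rw [ENNReal.toReal_inv, ENNReal.toReal_natCast] at this
    calc n * a.toReal < n * (n : ℝ)⁻¹ := mul_lt_mul_of_pos_left this hn'
      _ = 1 := mul_inv_cancel₀ hn'.ne'
  have hm : (m : ℝ) = n - n * a.toReal := by field_simp at h'; linarith
  have hmn : m = n := by
    have h1 : (m : ℝ) ≤ n := by nlinarith [ENNReal.toReal_nonneg (a := a)]
    have h2 : (n : ℝ) < m + 1 := by linarith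
    have : m ≤ n := by exact_mod_cast h1
    have : n < m + 1 := by exact_mod_cast h2
    omega
  subst hmn
  refine ⟨rfl, (ENNReal.toReal_eq_zero_iff _).mp ?_ |>.resolve_right ha_top⟩
  nlinarith [ENNReal.toReal_nonneg (a := a)]

theorem Real.one_sub_mul_rpow_neg_le {x a : ℝ} (hx : 0 ≤ x) (ha0 : 0 ≤ a) (ha1 : a ≤ 1) :
    (1 - a) * (x + 1) ^ (-a) ≤ (x + 1) ^ (1 - a) - x ^ (1 - a) := by
  have hx1 : 0 < x + 1 := by linarith
  have hamgm : x ^ (1 - a) * (x + 1) ^ a ≤ (1 - a) * x + a * (x + 1) :=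
    Real.geom_mean_le_arith_mean2_weighted (by linarith) ha0 hx hx1.le (by ring)
  have e1 : (x + 1) ^ (1 - a) = (x + 1) * (x + 1) ^ (-a) := by
    rw [sub_eq_add_neg, Real.rpow_add hx1, Real.rpow_one]
  have e2 : x ^ (1 - a) = x ^ (1 - a) * (x + 1) ^ a * (x + 1) ^ (-a) := by
    rw [mul_assoc, ← Real.rpow_add hx1, add_neg_cancel, Real.rpow_zero, mul_one]
  rw [e1, e2]
  nlinarith [Real.rpow_pos_of_pos hx1 (-a)]

theorem sum_range_rpow_neg_le (n : ℕ) {a : ℝ} (ha0 : 0 ≤ a) (ha1 : a < 1) :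
    ∑ k ∈ range n, ((k : ℝ) + 1) ^ (-a) ≤ (n : ℝ) ^ (1 - a) / (1 - a) := by
  rw [le_div_iff₀ (by linarith), sum_mul]
  calc ∑ k ∈ range n, ((k : ℝ) + 1) ^ (-a) * (1 - a)
      ≤ ∑ k ∈ range n, (((k + 1 : ℕ) : ℝ) ^ (1 - a) - (k : ℝ) ^ (1 - a)) := by
        refine sum_le_sum fun k _ => ?_
        rw [mul_comm, Nat.cast_succ]
        exact Real.one_sub_mul_rpow_neg_le k.cast_nonneg ha0 ha1.le
    _ = (n : ℝ) ^ (1 - a) := by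
        rw [sum_range_sub (fun k => (k : ℝ) ^ (1 - a)), Nat.cast_zero,
          Real.zero_rpow (by linarith), sub_zero]

theorem inv_mul_sum_range_rpow_le {n : ℕ} (hn : n ≠ 0) {d p R : ℝ} (hp : 0 < p) (hpd : p < d)
    (hR : 0 ≤ R) :
    (n : ℝ)⁻¹ * ∑ k ∈ range n, (R * ((k : ℝ) + 1) ^ (-1 / d)) ^ p ≤
      (R * ((d / (d - p)) ^ (1 / p) * (n : ℝ) ^ (-1 / d))) ^ p := by
  have hd : 0 < d := hp.trans hpd
  have hn' : (0 : ℝ) < n := by positivity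
  have hterm (x : ℝ) (hx : 0 < x) : (x ^ (-1 / d)) ^ p = x ^ (-(p / d)) := by
    rw [← Real.rpow_mul hx.le]; ring_nf
  have hsum : ∑ k ∈ range n, (R * ((k : ℝ) + 1) ^ (-1 / d)) ^ p =
      R ^ p * ∑ k ∈ range n, ((k : ℝ) + 1) ^ (-(p / d)) := by
    rw [mul_sum]
    refine sum_congr rfl fun k _ => ?_
    rw [Real.mul_rpow hR (by positivity), hterm _ (by positivity)]
  rw [hsum, Real.mul_rpow hR (by positivity), Real.mul_rpow (by positivity) (by positivity),
    ← Real.rpow_mul (by positivity), one_div_mul_cancel hp.ne', Real.rpow_one, hterm n hn']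
  have hpd' : p / d < 1 := (div_lt_one hd).mpr hpd
  calc (n : ℝ)⁻¹ * (R ^ p * ∑ k ∈ range n, ((k : ℝ) + 1) ^ (-(p / d)))
      ≤ (n : ℝ)⁻¹ * (R ^ p * ((n : ℝ) ^ (1 - p / d) / (1 - p / d))) := by
        gcongr
        exact sum_range_rpow_neg_le n (by positivity) hpd'
    _ = R ^ p * (d / (d - p) * (n : ℝ) ^ (-(p / d))) := by
        rw [sub_eq_add_neg, Real.rpow_add hn', Real.rpow_one]
        field_simp
        ring

theorem div_two_pow_le_mul_rpow {d j k : ℕ} (hd : d ≠ 0) {r : ℝ} (hr : 0 ≤ r)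
    (hk : k + 1 ≤ 2 ^ ((j + 1) * d)) : r / 2 ^ j ≤ 2 * r * ((k : ℝ) + 1) ^ (-(1 : ℝ) / d) := by
  have hk' : ((k : ℝ) + 1) ^ ((d : ℝ)⁻¹) ≤ 2 ^ (j + 1) := by
    rw [← Real.pow_rpow_inv_natCast (by positivity : (0 : ℝ) ≤ 2 ^ (j + 1)) hd, ← pow_mul]
    exact Real.rpow_le_rpow (by positivity) (by exact_mod_cast hk) (by positivity)
  rw [neg_div, one_div, Real.rpow_neg (by positivity), ← div_eq_mul_inv,
    le_div_iff₀ (by positivity)]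
  rw [pow_succ] at hk'
  calc r / 2 ^ j * ((k : ℝ) + 1) ^ ((d : ℝ)⁻¹) ≤ r / 2 ^ j * (2 ^ j * 2) := by gcongr
    _ = 2 * r := by field_simp

theorem add_sum_lt_two_pow {d M j : ℕ} {c : (Fin d → Bool) → ℕ} (hM : M < 2 ^ d)
    (hc : ∀ ε, c ε < 2 ^ ((j + 1) * d)) : M + ∑ ε, c ε < 2 ^ ((j + 2) * d) := by
  have hsum : ∑ ε, c ε ≤ 2 ^ d * (2 ^ ((j + 1) * d) - 1) := by
    simpa using sum_le_card_nsmul univ c _ fun ε _ => Nat.le_sub_one_of_lt (hc ε)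
  have hA : 2 ^ d ≤ 2 ^ d * 2 ^ ((j + 1) * d) := Nat.le_mul_of_pos_right _ Nat.one_le_two_pow
  rw [Nat.mul_sub_one] at hsum
  rw [show (j + 2) * d = d + (j + 1) * d by ring, pow_add]
  omega

theorem MeasureTheory.Measure.smul_le_self {E : Type*} [MeasurableSpace E] (σ : Measure E)
    {a : ℝ≥0∞} (ha : a ≤ 1) : a • σ ≤ σ :=
  Measure.le_iff.mpr fun A _ => by simpa using mul_le_of_le_one_left zero_le ha

theorem MeasureTheory.Measure.exists_eq_nsmul_add {E : Type*} [MeasurableSpace E]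
    (σ : Measure E) [IsFiniteMeasure σ] {u : ℝ≥0∞} (hu0 : u ≠ 0) :
    ∃ (M : ℕ) (τ δ : Measure E), σ = M • τ + δ ∧ δ ≤ σ ∧ δ Set.univ < u ∧
      M * u ≤ σ Set.univ ∧ (M ≠ 0 → τ Set.univ = u ∧ τ ≤ σ) := by
  set T := σ Set.univ
  have hT : T ≠ ∞ := measure_ne_top σ _
  rcases eq_or_ne T 0 with hT0 | hT0
  · refine ⟨0, 0, σ, by simp, le_rfl, ?_, by simp, by simp⟩
    rwa [show σ Set.univ = 0 from hT0, pos_iff_ne_zero]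
  obtain ⟨M, hle, hlt⟩ : ∃ M : ℕ, M * u ≤ T ∧ T < (M + 1) * u := by
    obtain ⟨m, hm⟩ := ENNReal.exists_nat_mul_gt hu0 hT
    induction m with
    | zero => simp at hm
    | succ k ih =>
      by_cases h : T < k * u
      · exact ih h
      · exact ⟨k, not_lt.mp h, by simpa using hm⟩
  -- The pieces are multiples of `σ` itself, so atoms of `σ` cause no trouble.
  refine ⟨M, (u / T) • σ, ((T - M * u) / T) • σ, ?_, ?_, ?_, hle, fun hM => ⟨?_, ?_⟩⟩
  · rw [← Nat.cast_smul_eq_nsmul ℝ≥0∞, smul_smul, ← add_smul, ← mul_div_assoc,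
      ENNReal.div_add_div_same, add_tsub_cancel_of_le hle, ENNReal.div_self hT0 hT, one_smul]
  · exact σ.smul_le_self (ENNReal.div_le_of_le_mul (by simp))
  · rw [Measure.smul_apply, smul_eq_mul, ENNReal.div_mul_cancel hT0 hT]
    exact ENNReal.sub_lt_of_lt_add hle (by simpa [add_mul, add_comm] using hlt)
  · rw [Measure.smul_apply, smul_eq_mul, ENNReal.div_mul_cancel hT0 hT]
  · refine σ.smul_le_self (ENNReal.div_le_of_le_mul ?_)
    rw [one_mul]
    exact (le_mul_of_one_le_left zero_le (by exact_mod_cast Nat.one_le_iff_ne_zero.mpr hM)).trans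
      hle

section Orthant

variable {d : ℕ}

noncomputable def orthant (c x : Fin d → ℝ) : Fin d → Bool := fun j => decide (c j < x j)

noncomputable def orthantCenter (c : Fin d → ℝ) (s : ℝ) (ε : Fin d → Bool) : Fin d → ℝ :=
  fun j => if ε j then c j + s / 2 else c j - s / 2

theorem measurable_orthant (c : Fin d → ℝ) : Measurable (orthant c) :=
  measurable_pi_iff.mpr fun j => measurable_to_bool (f := fun x => orthant c x j) <| by
    have : MeasurableSet {x : Fin d → ℝ | c j < x j} :=
      measurableSet_lt measurable_const (measurable_pi_apply j)
    convert this using 1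
    ext x
    simp [orthant]

theorem sum_restrict_orthant (σ : Measure (Fin d → ℝ)) (c : Fin d → ℝ) :
    ∑ ε, σ.restrict (orthant c ⁻¹' {ε}) = σ := by
  ext A hA
  have hfib (ε : Fin d → Bool) : MeasurableSet (orthant c ⁻¹' {ε}) :=
    measurable_orthant c (measurableSet_singleton ε)
  simp_rw [Measure.coe_finsetSum, Finset.sum_apply, Measure.restrict_apply' (hfib _)]
  have := sum_measure_preimage_singleton (μ := σ.restrict A) univ (f := orthant c)
    (fun ε _ => hfib ε)
  simpa [Measure.restrict_apply (hfib _), Set.inter_comm] using this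

theorem mem_closedBall_orthantCenter {c x : Fin d → ℝ} {s : ℝ} (hx : x ∈ closedBall c s) :
    x ∈ closedBall (orthantCenter c s (orthant c x)) (s / 2) := by
  have hs : 0 ≤ s := nonempty_closedBall.mp ⟨x, hx⟩
  rw [mem_closedBall, dist_pi_le_iff (by positivity)] at hx ⊢
  intro j
  have := hx j
  simp only [Real.dist_eq, abs_le, orthantCenter, orthant] at this ⊢
  by_cases h : c j < x j <;> simp [h] <;> constructor <;> linarith

end Orthant

/-- Bottom-up carving of `σ` along the dyadic subcubes, down to depth `L`, of a cube of
radius `s`; `rest` is what the top cube leaves over. -/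
structure DyadicCarving {d : ℕ} (u : ℝ≥0∞) (L : ℕ) (s : ℝ) (σ : Measure (Fin d → ℝ)) where
  ι : Type
  [instFintype : Fintype ι]
  piece : ι → Measure (Fin d → ℝ)
  center : ι → Fin d → ℝ
  level : ι → ℕ
  rest : Measure (Fin d → ℝ)
  sum_add_rest : ∑ i, piece i + rest = σ
  rest_le : rest ≤ σ
  rest_univ_lt : rest Set.univ < u
  piece_univ : ∀ i, piece i Set.univ = u
  piece_compl_closedBall : ∀ i, piece i (closedBall (center i) (s / 2 ^ level i))ᶜ = 0
  level_le : ∀ i, level i ≤ L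
  card_level_le_lt : ∀ j < L, #{i | level i ≤ j} < 2 ^ ((j + 1) * d)

attribute [instance] DyadicCarving.instFintype

namespace DyadicCarving

variable {d : ℕ} {u : ℝ≥0∞} {s : ℝ} {σ : Measure (Fin d → ℝ)} {c : Fin d → ℝ}

theorem nonempty_zero (hu : u ≠ 0) [IsFiniteMeasure σ] (hσ : σ (closedBall c s)ᶜ = 0) :
    Nonempty (DyadicCarving u 0 s σ) := by
  obtain ⟨M, τ, δ, hσδ, hδ, hδu, -, hτ⟩ := σ.exists_eq_nsmul_add hu
  exact ⟨{
    ι := Fin M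
    piece := fun _ => τ
    center := fun _ => c
    level := fun _ => 0
    rest := δ
    sum_add_rest := by simp [hσδ]
    rest_le := hδ
    rest_univ_lt := hδu
    piece_univ := fun i => (hτ (Fin.pos i).ne').1
    piece_compl_closedBall := fun i => by
      simpa using Measure.absolutelyContinuous_of_le (hτ (Fin.pos i).ne').2 hσ
    level_le := fun _ => le_rfl
    card_level_le_lt := fun _ hj => absurd hj (Nat.not_lt_zero _) }⟩

theorem sum_rest_le {L : ℕ}
    (C : ∀ ε, DyadicCarving u L (s / 2) (σ.restrict (orthant c ⁻¹' {ε}))) :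
    ∑ ε, (C ε).rest ≤ σ :=
  calc ∑ ε, (C ε).rest ≤ ∑ ε, σ.restrict (orthant c ⁻¹' {ε}) :=
        sum_le_sum fun ε _ => (C ε).rest_le
    _ = σ := sum_restrict_orthant σ c

theorem sum_rest_univ_lt {L : ℕ} {σ : (Fin d → Bool) → Measure (Fin d → ℝ)}
    (C : ∀ ε, DyadicCarving u L s (σ ε)) : (∑ ε, (C ε).rest) Set.univ < 2 ^ d * u :=
  calc (∑ ε, (C ε).rest) Set.univ = ∑ ε, (C ε).rest Set.univ := by simp
    _ < ∑ _ε : Fin d → Bool, u :=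
      ENNReal.sum_lt_sum_of_nonempty univ_nonempty fun ε _ => (C ε).rest_univ_lt
    _ = 2 ^ d * u := by simp

theorem nonempty_succ {L : ℕ} (hu : u ≠ 0) [IsFiniteMeasure σ]
    (hσ : σ (closedBall c s)ᶜ = 0)
    (C : ∀ ε, DyadicCarving u L (s / 2) (σ.restrict (orthant c ⁻¹' {ε}))) :
    Nonempty (DyadicCarving u (L + 1) s σ) := by
  set δ₀ := ∑ ε, (C ε).rest
  have hδ₀σ : δ₀ ≤ σ := sum_rest_le C
  have : IsFiniteMeasure δ₀ := isFiniteMeasure_of_le σ hδ₀σ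
  obtain ⟨M, τ, δ, hδ₀δ, hδ, hδu, hMu, hτ⟩ := δ₀.exists_eq_nsmul_add hu
  have hM : M < 2 ^ d := by
    exact_mod_cast lt_of_mul_lt_mul_right' (hMu.trans_lt (sum_rest_univ_lt C))
  have hτσ (i : Fin M) : τ ≤ σ := ((hτ (Fin.pos i).ne').2).trans hδ₀σ
  exact ⟨{
    ι := Fin M ⊕ Σ ε, (C ε).ι
    piece := Sum.elim (fun _ => τ) fun i => (C i.1).piece i.2
    center := Sum.elim (fun _ => c) fun i => (C i.1).center i.2
    level := Sum.elim (fun _ => 0) fun i => (C i.1).level i.2 + 1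
    rest := δ
    sum_add_rest := by
      rw [Fintype.sum_sum_type, Fintype.sum_sigma]
      calc ∑ _i : Fin M, τ + ∑ ε, ∑ i, (C ε).piece i + δ
          = ∑ ε, ∑ i, (C ε).piece i + (M • τ + δ) := by simp; abel
        _ = ∑ ε, (∑ i, (C ε).piece i + (C ε).rest) := by rw [← hδ₀δ, sum_add_distrib]
        _ = σ := by simp_rw [(C _).sum_add_rest]; exact sum_restrict_orthant σ c
    rest_le := hδ.trans hδ₀σ
    rest_univ_lt := hδu
    piece_univ := by
      rintro (i | ⟨ε, i⟩)
      · exact (hτ (Fin.pos i).ne').1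
      · exact (C ε).piece_univ i
    piece_compl_closedBall := by
      rintro (i | ⟨ε, i⟩)
      · simpa using Measure.absolutelyContinuous_of_le (hτσ i) hσ
      · simpa [pow_succ', div_div] using (C ε).piece_compl_closedBall i
    level_le := by
      rintro (i | ⟨ε, i⟩)
      · exact Nat.zero_le _
      · exact Nat.succ_le_succ ((C ε).level_le i)
    card_level_le_lt := by
      intro j hj
      simp only [card_filter, Fintype.sum_sum_type, Fintype.sum_sigma, Sum.elim_inl,
        Sum.elim_inr]
      rcases j with _ | j
      · simpa using hM
      simp only [zero_le, ite_true, sum_const, card_univ, Fintype.card_fin, smul_eq_mul,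
        mul_one, add_le_add_iff_right]
      exact add_sum_lt_two_pow hM fun ε => by
        simpa only [card_filter] using (C ε).card_level_le_lt j (by omega) }⟩

theorem nonempty (hu : u ≠ 0) (L : ℕ) (σ : Measure (Fin d → ℝ)) [IsFiniteMeasure σ]
    (c : Fin d → ℝ) (s : ℝ) (hσ : σ (closedBall c s)ᶜ = 0) :
    Nonempty (DyadicCarving u L s σ) := by
  induction L generalizing σ c s with
  | zero => exact nonempty_zero hu hσ
  | succ L ih =>
    refine nonempty_succ hu hσ fun ε => (ih _ (orthantCenter c s ε) (s / 2) ?_).some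
    rw [Measure.restrict_apply measurableSet_closedBall.compl]
    refine measure_mono_null (fun x ⟨hx, hxε⟩ => ?_) hσ
    intro hxc
    simp only [Set.mem_preimage, Set.mem_singleton_iff] at hxε
    exact hx (hxε ▸ mem_closedBall_orthantCenter hxc)

theorem card_eq_and_rest_eq_zero {n L : ℕ} {ρ : Measure (Fin d → ℝ)}
    [IsProbabilityMeasure ρ] (hn : n ≠ 0) (C : DyadicCarving (n : ℝ≥0∞)⁻¹ L s ρ) :
    Fintype.card C.ι = n ∧ C.rest = 0 := by
  have h := congrArg (· Set.univ) C.sum_add_rest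
  simp only [Measure.add_apply, Measure.coe_finsetSum, Finset.sum_apply, C.piece_univ,
    sum_const, card_univ, nsmul_eq_mul, measure_univ, ← div_eq_mul_inv] at h
  obtain ⟨hcard, hrest⟩ :=
    ENNReal.eq_and_eq_zero_of_natCast_div_add_eq_one hn h C.rest_univ_lt
  exact ⟨hcard, Measure.measure_univ_eq_zero.mp hrest⟩

end DyadicCarving

theorem exists_uniform_decomposition {d n : ℕ} (hd : d ≠ 0) (hn : n ≠ 0)
    (ρ : Measure (Fin d → ℝ)) [IsProbabilityMeasure ρ] (c : Fin d → ℝ) {r : ℝ} (hr : 0 ≤ r)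
    (hρ : ρ (closedBall c r)ᶜ = 0) :
    ∃ (μ : Fin n → Measure (Fin d → ℝ)) (x : Fin n → Fin d → ℝ), ∑ k, μ k = ρ ∧
      (∀ k, μ k Set.univ = (n : ℝ≥0∞)⁻¹) ∧
      ∀ k : Fin n, μ k (closedBall (x k) (2 * r * ((k : ℝ) + 1) ^ (-(1 : ℝ) / d)))ᶜ = 0 := by
  -- Depth `n` suffices: a piece at the leaf level `n` has index `k < n ≤ 2 ^ ((n + 1) * d)`.
  obtain ⟨C⟩ := DyadicCarving.nonempty (u := (n : ℝ≥0∞)⁻¹) (by simp) n ρ c r hρ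
  obtain ⟨hcard, hrest⟩ := C.card_eq_and_rest_eq_zero hn
  obtain ⟨e, he⟩ := Fintype.exists_equiv_fin_succ_le_card_le C.level hcard
  refine ⟨C.piece ∘ e, C.center ∘ e, ?_, fun k => C.piece_univ _, fun k => ?_⟩
  · simpa [hrest, e.sum_comp C.piece] using C.sum_add_rest
  have hk : (k : ℕ) + 1 ≤ 2 ^ ((C.level (e k) + 1) * d) := by
    rcases (C.level_le (e k)).lt_or_eq with hlt | heq
    · exact (he k).trans (C.card_level_le_lt _ hlt).le
    · calc (k : ℕ) + 1 ≤ n := k.isLt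
        _ ≤ 2 ^ n := Nat.lt_two_pow_self.le
        _ ≤ 2 ^ ((C.level (e k) + 1) * d) := Nat.pow_le_pow_right two_pos (by
          rw [heq]; nlinarith [Nat.one_le_iff_ne_zero.mpr hd])
  exact measure_mono_null (Set.compl_subset_compl.mpr <| closedBall_subset_closedBall <|
    div_two_pow_le_mul_rpow hd hr hk) (C.piece_compl_closedBall (e k))

theorem wpCost_smul_sum_dirac_le {d : ℕ} {ι : Type*} [Fintype ι] {p : ℝ} (hp : 0 ≤ p)
    (μ : ι → Measure (Fin d → ℝ)) (x : ι → Fin d → ℝ) (R : ι → ℝ) {m : ℝ≥0∞}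
    (hμ : ∀ i, μ i Set.univ = m) (hR : ∀ i, μ i (closedBall (x i) (R i))ᶜ = 0) :
    WpCost p (m • ∑ i, Measure.dirac (x i)) (∑ i, μ i) ≤
      m * ∑ i, ENNReal.ofReal (R i ^ p) := by
  have hmk (i : ι) : Measurable (Prod.mk (β := Fin d → ℝ) (x i)) := measurable_prodMk_left
  have hmap {β : Type} [MeasurableSpace β] {f : (Fin d → ℝ) × (Fin d → ℝ) → β}
      (hf : Measurable f) : (∑ i, (μ i).map (Prod.mk (x i))).map f =
        ∑ i, (μ i).map (f ∘ Prod.mk (x i)) := by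
    simp_rw [← Measure.mapₗ_apply_of_measurable hf, map_sum,
      Measure.mapₗ_apply_of_measurable hf, Measure.map_map hf (hmk _)]
  refine iInf₂_le_of_le (∑ i, (μ i).map (Prod.mk (x i))) ?_ (iInf_le_of_le ?_ ?_)
  · simp [hmap measurable_fst, Function.comp_def, Measure.map_const, hμ, Finset.smul_sum]
  · simp [hmap measurable_snd, Function.comp_def]
  rw [lintegral_finsetSum_measure, Finset.mul_sum]
  refine sum_le_sum fun i _ => ?_
  rw [lintegral_map (by fun_prop) (hmk i), mul_comm, ← hμ i, ← lintegral_const]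
  refine lintegral_mono_ae ?_
  filter_upwards [mem_ae_iff.mpr (hR i)] with y hy
  exact ENNReal.ofReal_le_ofReal <| Real.rpow_le_rpow (norm_nonneg _)
    (by simpa [dist_eq_norm, norm_sub_rev] using hy) hp

theorem empirical_quantization_subcritical (d n : ℕ) (hd : 1 ≤ d) (hn : 1 ≤ n)
    (p : ℝ) (hp : 1 ≤ p) (hpd : p < d) (r : ℝ) (hr : 0 ≤ r)
    (ρ : Measure (Fin d → ℝ)) [IsProbabilityMeasure ρ]
    (hsupp : ρ (closedBall 0 r)ᶜ = 0) :
    ∃ x : Fin n → (Fin d → ℝ),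
      (WpCost p ((n : ℝ≥0∞)⁻¹ • ∑ k, Measure.dirac (x k)) ρ) ^ ((1 : ℝ) / p) ≤
        ENNReal.ofReal (4 * r * ((d / (d - p)) ^ ((1 : ℝ) / p) * (n : ℝ) ^ (-(1 : ℝ) / d))) := by
  obtain ⟨μ, x, hμρ, hμ, hμR⟩ :=
    exists_uniform_decomposition (n := n) (by omega) (by omega) ρ 0 hr hsupp
  refine ⟨x, ?_⟩
  have hp0 : 0 < p := by linarith
  rw [← ENNReal.rpow_le_rpow_iff hp0, ← ENNReal.rpow_mul, one_div_mul_cancel hp0.ne',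
    ENNReal.rpow_one, ENNReal.ofReal_rpow_of_nonneg (by positivity) hp0.le]
  calc WpCost p ((n : ℝ≥0∞)⁻¹ • ∑ k, Measure.dirac (x k)) ρ
      ≤ (n : ℝ≥0∞)⁻¹ * ∑ k : Fin n,
          ENNReal.ofReal ((2 * r * ((k : ℝ) + 1) ^ (-(1 : ℝ) / d)) ^ p) :=
        hμρ ▸ wpCost_smul_sum_dirac_le hp0.le μ x _ hμ hμR
    _ = ENNReal.ofReal ((n : ℝ)⁻¹ *
          ∑ k ∈ range n, (2 * r * ((k : ℝ) + 1) ^ (-(1 : ℝ) / d)) ^ p) := by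
        rw [Fin.sum_univ_eq_sum_range
            (fun k => ENNReal.ofReal ((2 * r * ((k : ℝ) + 1) ^ (-(1 : ℝ) / d)) ^ p)),
          ENNReal.ofReal_mul (by positivity), ENNReal.ofReal_sum_of_nonneg
            (fun k _ => by positivity), ENNReal.ofReal_inv_of_pos (by positivity),
          ENNReal.ofReal_natCast]
    _ ≤ ENNReal.ofReal
          ((2 * r * ((d / (d - p)) ^ ((1 : ℝ) / p) * (n : ℝ) ^ (-(1 : ℝ) / d))) ^ p) :=
        ENNReal.ofReal_le_ofReal (inv_mul_sum_range_rpow_le (by omega) hp0 hpd (by positivity))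
    _ ≤ _ := by gcongr; norm_num
end

section
/- Let r ≥ 0 and let ρ be a probability measure on ℝ^d supported in B_r. For every n ≥ 1 and p = d, there exist points x_1,…,x_n ∈ ℝ^d such that the empirical measure μ^(n) = n^{-1} Σ_{k=1}^n δ_{x_k} satisfies W_d(μ^(n), ρ) ≤ 4r · ((1 + ln n)/n)^{1/d}. -/
/-!
Greedy quantization. Suppose a sub-measure `μ ≤ ρ` of mass `k / n` is left. Cutting the cube
`[-r, r]^d` into `⌊k^{1/d}⌋^d ≤ k` congruent cells, some cell carries mass at least `1 / n`, and
its sup-norm diameter is at most `4 r k^{-1/d}`. Peel off mass exactly `1 / n` of `μ` inside that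
cell and repeat with `k - 1`. This splits `ρ` into `n` pieces of mass `1 / n`, the `k`-th of
diameter at most `4 r k^{-1/d}`. Transporting each piece to a point of its cell costs at most
`(1 / n) (4 r)^d / k`, and `∑_{k ≤ n} 1 / k ≤ 1 + log n`.
-/

open MeasureTheory Metric
open scoped ENNReal NNReal

open Set

theorem WpCost_smul_sum_dirac_le {d : ℕ} {ι : Type*} [Fintype ι] {p : ℝ} (hp : 0 ≤ p)
    {c : ℝ≥0∞} (x : ι → Fin d → ℝ) (q : ι → Measure (Fin d → ℝ)) (δ : ι → ℝ)
    (hq : ∀ i, q i univ = c) (hδ : ∀ i, ∀ᵐ y ∂q i, ‖x i - y‖ ≤ δ i) :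
    WpCost p (c • ∑ i, Measure.dirac (x i)) (∑ i, q i) ≤
      c * ∑ i, ENNReal.ofReal (δ i ^ p) := by
  have hcost : Measurable fun z : (Fin d → ℝ) × (Fin d → ℝ) => ENNReal.ofReal (‖z.1 - z.2‖ ^ p) :=
    by fun_prop
  have hx : ∀ i, Measurable fun y : Fin d → ℝ => (x i, y) := fun i => by fun_prop
  refine le_trans (iInf₂_le_of_le (∑ i, (q i).map fun y => (x i, y)) ?_ (iInf_le _ ?_)) ?_
  · rw [Measure.map_finset_sum' measurable_fst.aemeasurable, Finset.smul_sum]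
    refine Finset.sum_congr rfl fun i _ => ?_
    rw [Measure.map_map measurable_fst (hx i)]
    exact (Measure.map_const _ _).trans (by rw [hq])
  · rw [Measure.map_finset_sum' measurable_snd.aemeasurable]
    refine Finset.sum_congr rfl fun i _ => ?_
    rw [Measure.map_map measurable_snd (hx i)]
    exact Measure.map_id
  · rw [lintegral_finsetSum_measure, Finset.mul_sum]
    refine Finset.sum_le_sum fun i _ => ?_
    rw [lintegral_map hcost (hx i), mul_comm, ← hq i, ← lintegral_const]
    refine lintegral_mono_ae ((hδ i).mono fun y hy => ?_)
    exact ENNReal.ofReal_le_ofReal (Real.rpow_le_rpow (norm_nonneg _) hy hp)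

theorem clamp_floor_le {m : ℕ} {u : ℝ} (hu : 0 ≤ u) : (Fin.clamp ⌊u⌋₊ m : ℝ) ≤ u :=
  (Nat.cast_le.mpr (min_le_left _ _)).trans (Nat.floor_le hu)

theorem le_clamp_floor_add_one {m : ℕ} {u : ℝ} (hu : u ≤ m + 1) :
    u ≤ (Fin.clamp ⌊u⌋₊ m : ℝ) + 1 := by
  rcases le_total ⌊u⌋₊ m with h | h
  · simpa [Fin.clamp, min_eq_left h] using (Nat.lt_floor_add_one u).le
  · simpa [Fin.clamp, min_eq_right h] using hu

theorem abs_sub_le_one_of_clamp_floor_eq {m : ℕ} {u v : ℝ} (hu₀ : 0 ≤ u) (hu₁ : u ≤ m + 1)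
    (hv₀ : 0 ≤ v) (hv₁ : v ≤ m + 1) (h : Fin.clamp ⌊u⌋₊ m = Fin.clamp ⌊v⌋₊ m) :
    |u - v| ≤ 1 := by
  have := clamp_floor_le (m := m) hu₀
  have := clamp_floor_le (m := m) hv₀
  have := le_clamp_floor_add_one hu₁
  have := le_clamp_floor_add_one hv₁
  rw [h] at *
  exact abs_sub_le_iff.mpr ⟨by linarith, by linarith⟩

/-- The index of the interval containing `t` when `[-r, r]` is cut into `m + 1` intervals of
equal length (the right endpoint `r` is put in the last one). -/
noncomputable def gridIndex (m : ℕ) (r t : ℝ) : Fin (m + 1) :=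
  Fin.clamp ⌊(t + r) * (m + 1) / (2 * r)⌋₊ m

theorem measurable_gridIndex (m : ℕ) (r : ℝ) : Measurable (gridIndex m r) :=
  (measurable_from_top (f := fun n : ℕ => Fin.clamp n m)).comp (by fun_prop)

theorem abs_sub_le_of_gridIndex_eq {m : ℕ} {r s t : ℝ} (hs : |s| ≤ r) (ht : |t| ≤ r)
    (h : gridIndex m r s = gridIndex m r t) : |s - t| ≤ 2 * r / (m + 1) := by
  rcases ((abs_nonneg s).trans hs).eq_or_lt with rfl | hr
  · simp [abs_nonpos_iff.mp hs, abs_nonpos_iff.mp ht]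
  have hscale : ∀ w : ℝ, |w| ≤ r →
      0 ≤ (w + r) * (m + 1) / (2 * r) ∧ (w + r) * (m + 1) / (2 * r) ≤ m + 1 := by
    intro w hw
    obtain ⟨hw₁, hw₂⟩ := abs_le.mp hw
    constructor
    · exact div_nonneg (mul_nonneg (by linarith) (by positivity)) (by positivity)
    · rw [div_le_iff₀ (by positivity)]; nlinarith
  obtain ⟨hs₀, hs₁⟩ := hscale s hs
  obtain ⟨ht₀, ht₁⟩ := hscale t ht
  have hscaled := abs_sub_le_one_of_clamp_floor_eq hs₀ hs₁ ht₀ ht₁ h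
  have hst : s - t = ((s + r) * (m + 1) / (2 * r) - (t + r) * (m + 1) / (2 * r)) *
      (2 * r / (m + 1)) := by field_simp; ring
  rw [hst, abs_mul, abs_of_pos (by positivity : 0 < 2 * r / (m + 1))]
  exact mul_le_of_le_one_left (by positivity) hscaled

theorem exists_le_measure_preimage_singleton {α ι : Type*} [MeasurableSpace α] [Fintype ι]
    [Nonempty ι] {f : α → ι} (hf : ∀ i, MeasurableSet (f ⁻¹' {i})) (μ : Measure α) :
    ∃ i, μ univ / Fintype.card ι ≤ μ (f ⁻¹' {i}) := by
  obtain ⟨i, -, hi⟩ := ENNReal.exists_le_of_sum_le (Finset.univ_nonempty (α := ι))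
    (f := fun _ => μ univ / Fintype.card ι) (g := fun i => μ (f ⁻¹' {i})) <| by
      rw [sum_measure_preimage_singleton _ fun i _ => hf i, Finset.sum_const, Finset.card_univ,
        nsmul_eq_mul, Finset.coe_univ, preimage_univ]
      exact ENNReal.mul_div_le
  exact ⟨i, hi⟩

theorem exists_gridCell {d : ℕ} (m : ℕ) {r : ℝ} (μ : Measure (Fin d → ℝ))
    (hμ : μ (closedBall 0 r)ᶜ = 0) :
    ∃ C, MeasurableSet C ∧ μ univ / ↑((m + 1) ^ d) ≤ μ C ∧
      ∀ x ∈ C, ∀ y ∈ C, ‖x - y‖ ≤ 2 * r / (m + 1) := by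
  set cell : (Fin d → ℝ) → Fin d → Fin (m + 1) := fun x i => gridIndex m r (x i)
  have hcell : Measurable cell := measurable_pi_lambda _ fun i =>
    (measurable_gridIndex m r).comp (measurable_pi_apply i)
  obtain ⟨c, hc⟩ := exists_le_measure_preimage_singleton
    (fun c => hcell (measurableSet_singleton c)) μ
  refine ⟨cell ⁻¹' {c} ∩ closedBall 0 r, (hcell (measurableSet_singleton c)).inter
    measurableSet_closedBall, ?_, ?_⟩
  · rw [measure_inter_conull hμ]
    simpa using hc
  · rintro x ⟨hxc, hx⟩ y ⟨hyc, hy⟩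
    have hcoord : ∀ z ∈ closedBall (0 : Fin d → ℝ) r, ∀ i, |z i| ≤ r := fun z hz i =>
      (norm_le_pi_norm z i).trans (mem_closedBall_zero_iff.mp hz)
    have hr : 0 ≤ r := (norm_nonneg x).trans (mem_closedBall_zero_iff.mp hx)
    refine (pi_norm_le_iff_of_nonneg (by positivity)).mpr fun i => ?_
    exact abs_sub_le_of_gridIndex_eq (hcoord x hx i) (hcoord y hy i)
      (congrFun (hxc.trans hyc.symm) i)

theorem exists_measurableSet_measure_ge_div {d k : ℕ} (hd : d ≠ 0) (hk : k ≠ 0) {r : ℝ}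
    (hr : 0 ≤ r) (μ : Measure (Fin d → ℝ)) (hμ : μ (closedBall 0 r)ᶜ = 0) :
    ∃ C, MeasurableSet C ∧ μ univ / k ≤ μ C ∧
      ∀ x ∈ C, ∀ y ∈ C, ‖x - y‖ ≤ 4 * r / (k : ℝ) ^ (d : ℝ)⁻¹ := by
  set K := (k : ℝ) ^ (d : ℝ)⁻¹
  have hK : 1 ≤ K := Real.one_le_rpow (by exact_mod_cast Nat.one_le_iff_ne_zero.mpr hk)
    (by positivity)
  -- use a grid with `⌊K⌋₊ ∈ (K / 2, K]` intervals per side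
  obtain ⟨m, hm⟩ : ∃ m, ⌊K⌋₊ = m + 1 :=
    ⟨⌊K⌋₊ - 1, by have := Nat.one_le_floor_iff _ |>.mpr hK; omega⟩
  have hmK : (m + 1 : ℝ) ≤ K := by exact_mod_cast hm ▸ Nat.floor_le (by positivity)
  have hKm : K ≤ 2 * (m + 1) := by
    have := Nat.lt_floor_add_one K
    rw [hm] at this
    push_cast at this
    linarith
  have hcard : (m + 1) ^ d ≤ k := by
    have : ((m + 1 : ℝ)) ^ d ≤ k :=
      calc ((m + 1 : ℝ)) ^ d ≤ K ^ d := pow_le_pow_left₀ (by positivity) hmK d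
        _ = k := Real.rpow_inv_natCast_pow (by positivity) hd
    exact_mod_cast this
  obtain ⟨C, hC, hμC, hdiam⟩ := exists_gridCell m μ hμ
  refine ⟨C, hC, le_trans (ENNReal.div_le_div_left (by exact_mod_cast hcard) _) hμC,
    fun x hx y hy => (hdiam x hx y hy).trans ?_⟩
  rw [div_le_div_iff₀ (by positivity) (by positivity)]
  nlinarith

theorem exists_le_measure_univ_eq {α : Type*} [MeasurableSpace α] {μ : Measure α} {C : Set α}
    (hC : MeasurableSet C) {c : ℝ≥0∞} (hc : c ≤ μ C) (hμC : μ C ≠ ∞) :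
    ∃ ν ≤ μ, ν univ = c ∧ ν Cᶜ = 0 := by
  refine ⟨(c / μ C) • μ.restrict C, ?_, ?_, ?_⟩
  · calc (c / μ C) • μ.restrict C ≤ (1 : ℝ≥0∞) • μ.restrict C := by
          gcongr
          exact ENNReal.div_le_of_le_mul (by rwa [one_mul])
      _ ≤ μ := by rw [one_smul]; exact Measure.restrict_le_self
  · rcases eq_or_ne (μ C) 0 with h0 | h0
    · simp [h0, le_antisymm (h0 ▸ hc) zero_le]
    · simp [ENNReal.div_mul_cancel h0 hμC]
  · simp [Measure.restrict_apply hC.compl]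

theorem exists_le_measure_univ_eq_ae_norm_sub_le {d k : ℕ} (hd : d ≠ 0) (hk : k ≠ 0) {r : ℝ}
    (hr : 0 ≤ r) {μ : Measure (Fin d → ℝ)} (hμ : μ (closedBall 0 r)ᶜ = 0)
    (hμ_fin : μ univ ≠ ∞) {c : ℝ≥0∞} (hc : c ≤ μ univ / k) :
    ∃ ν ≤ μ, ν univ = c ∧ ∃ x, ∀ᵐ y ∂ν, ‖x - y‖ ≤ 4 * r / (k : ℝ) ^ (d : ℝ)⁻¹ := by
  obtain ⟨C, hC, hμC, hdiam⟩ := exists_measurableSet_measure_ge_div hd hk hr μ hμ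
  obtain ⟨ν, hνμ, hν, hνC⟩ := exists_le_measure_univ_eq hC (hc.trans hμC)
    (measure_ne_top_of_subset (subset_univ C) hμ_fin)
  refine ⟨ν, hνμ, hν, ?_⟩
  rcases C.eq_empty_or_nonempty with rfl | ⟨x, hx⟩
  · rw [compl_empty, Measure.measure_univ_eq_zero] at hνC
    simp [hνC]
  · exact ⟨x, (ae_iff.mpr hνC).mono fun y hy => hdiam x hx y hy⟩

theorem exists_fin_decomposition {α : Type*} [MeasurableSpace α] {ρ : Measure α} {c : ℝ≥0∞}
    (hc : c ≠ ∞) (P : ℕ → Measure α → Prop)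
    (hP : ∀ (k : ℕ) (μ : Measure α), μ ≤ ρ → μ univ = (k + 1 : ℕ) * c →
      ∃ ν ≤ μ, ν univ = c ∧ P (k + 1) ν) :
    ∀ (k : ℕ) (μ : Measure α), μ ≤ ρ → μ univ = k * c →
      ∃ q : Fin k → Measure α, ∑ i, q i = μ ∧ ∀ i, q i univ = c ∧ P (i + 1) (q i) := by
  intro k
  induction k with
  | zero =>
    intro μ _ hμ
    refine ⟨Fin.elim0, ?_, fun i => i.elim0⟩
    rw [Nat.cast_zero, zero_mul, Measure.measure_univ_eq_zero] at hμ
    simp [hμ]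
  | succ k ih =>
    intro μ hμρ hμ
    obtain ⟨ν, hνμ, hν, hPν⟩ := hP k μ hμρ hμ
    have : IsFiniteMeasure ν := ⟨hν ▸ hc.lt_top⟩
    obtain ⟨q, hq, hqP⟩ := ih (μ - ν) (Measure.sub_le.trans hμρ) <| by
      rw [Measure.sub_apply MeasurableSet.univ hνμ, hμ, hν, Nat.cast_succ, add_mul, one_mul,
        ENNReal.add_sub_cancel_right hc]
    refine ⟨Fin.snoc q ν, ?_, Fin.lastCases ?_ fun i => ?_⟩
    · simp [Fin.sum_univ_castSucc, hq, Measure.sub_add_cancel_of_le hνμ]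
    · simpa using ⟨hν, hPν⟩
    · simpa using hqP i

theorem sum_div_rpow_inv_rpow {d : ℕ} (hd : d ≠ 0) {a : ℝ} (ha : 0 ≤ a) (n : ℕ) :
    ∑ i : Fin n, (a / ((i + 1 : ℕ) : ℝ) ^ (d : ℝ)⁻¹) ^ (d : ℝ) = a ^ (d : ℝ) * harmonic n := by
  have hterm : ∀ k : ℕ, (a / ((k + 1 : ℕ) : ℝ) ^ (d : ℝ)⁻¹) ^ (d : ℝ) =
      a ^ (d : ℝ) * ((k + 1 : ℕ) : ℝ)⁻¹ := fun k => by
    rw [Real.div_rpow ha (by positivity), Real.rpow_inv_rpow (by positivity) (by exact_mod_cast hd),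
      div_eq_mul_inv]
  simp only [hterm, ← Finset.mul_sum]
  rw [Fin.sum_univ_eq_sum_range (fun k => ((k + 1 : ℕ) : ℝ)⁻¹), harmonic]
  push_cast
  rfl

theorem inv_mul_sum_ofReal_le {d : ℕ} (hd : d ≠ 0) {a : ℝ} (ha : 0 ≤ a) (n : ℕ) :
    (n : ℝ≥0∞)⁻¹ * ∑ i : Fin n, ENNReal.ofReal ((a / ((i + 1 : ℕ) : ℝ) ^ (d : ℝ)⁻¹) ^ (d : ℝ)) ≤
      ENNReal.ofReal (a * ((1 + Real.log n) / n) ^ (d : ℝ)⁻¹) ^ (d : ℝ) := by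
  obtain rfl | hn := n.eq_zero_or_pos
  · simp
  have hX : 0 ≤ (1 + Real.log n) / n := by have := Real.log_natCast_nonneg n; positivity
  rw [← ENNReal.ofReal_sum_of_nonneg fun i _ => by positivity, sum_div_rpow_inv_rpow hd ha,
    ENNReal.ofReal_rpow_of_nonneg (by positivity) (by positivity),
    Real.mul_rpow ha (by positivity), Real.rpow_inv_rpow hX (by exact_mod_cast hd),
    ← ENNReal.ofReal_natCast, ← ENNReal.ofReal_inv_of_pos (by exact_mod_cast hn),
    ← ENNReal.ofReal_mul (by positivity)]
  refine ENNReal.ofReal_le_ofReal ?_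
  rw [mul_div_assoc', div_eq_inv_mul]
  have := harmonic_le_one_add_log n
  gcongr

theorem empirical_quantization_critical (d n : ℕ) (hd : 1 ≤ d) (hn : 1 ≤ n)
    (r : ℝ) (hr : 0 ≤ r)
    (ρ : Measure (Fin d → ℝ)) [IsProbabilityMeasure ρ]
    (hsupp : ρ (closedBall 0 r)ᶜ = 0) :
    ∃ x : Fin n → (Fin d → ℝ),
      (WpCost (d : ℝ) ((n : ℝ≥0∞)⁻¹ • ∑ k, Measure.dirac (x k)) ρ) ^ ((1 : ℝ) / d) ≤
        ENNReal.ofReal (4 * r * ((1 + Real.log n) / n) ^ ((1 : ℝ) / d)) := by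
  have hd₀ : d ≠ 0 := Nat.one_le_iff_ne_zero.mp hd
  have hn₀ : (n : ℝ≥0∞) ≠ 0 := Nat.cast_ne_zero.mpr (Nat.one_le_iff_ne_zero.mp hn)
  have hc : (n : ℝ≥0∞)⁻¹ ≠ ∞ := ENNReal.inv_ne_top.mpr hn₀
  have hpeel : ∀ (k : ℕ) (μ : Measure (Fin d → ℝ)), μ ≤ ρ → μ univ = (k + 1 : ℕ) * (n : ℝ≥0∞)⁻¹ →
      ∃ ν ≤ μ, ν univ = (n : ℝ≥0∞)⁻¹ ∧
        ∃ x, ∀ᵐ y ∂ν, ‖x - y‖ ≤ 4 * r / ((k + 1 : ℕ) : ℝ) ^ (d : ℝ)⁻¹ := by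
    intro k μ hμρ hμ
    refine exists_le_measure_univ_eq_ae_norm_sub_le hd₀ (Nat.add_one_ne_zero k) hr
      (nonpos_iff_eq_zero.mp (hsupp ▸ hμρ _)) ?_ ?_
    · rw [hμ]
      exact ENNReal.mul_ne_top (ENNReal.natCast_ne_top _) hc
    · rw [hμ, mul_comm, ENNReal.mul_div_cancel_right (by simp) (ENNReal.natCast_ne_top _)]
  obtain ⟨q, hqρ, hq⟩ := exists_fin_decomposition hc
    (fun k ν => ∃ x, ∀ᵐ y ∂ν, ‖x - y‖ ≤ 4 * r / (k : ℝ) ^ (d : ℝ)⁻¹) hpeel n ρ le_rfl <| by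
    rw [measure_univ, ENNReal.mul_inv_cancel hn₀ (ENNReal.natCast_ne_top n)]
  choose hmass x hx using hq
  refine ⟨x, ?_⟩
  have hcost := WpCost_smul_sum_dirac_le (Nat.cast_nonneg d) x q _ hmass hx
  rw [hqρ] at hcost
  rw [one_div, ENNReal.rpow_inv_le_iff (by positivity)]
  exact hcost.trans (inv_mul_sum_ofReal_le hd₀ (by positivity) n)
end

section
/- Let N = c·n with c, n positive integers, and let x_1,…,x_N be points in ℝ^d. Then there exist pairwise disjoint subsets C_1,…,C_n of {1,…,N} whose union is {1,…,N}, with Card(C_k) = c for every k, and such that for every k = 1,…,n, Diam({x_i : i ∈ C_k}) ≤ 4r·k^{-1/d}, where r = max_{1≤i≤N} ‖x_i‖. -/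
/-!
All points lie in the cube `[-r, r]^d`. Given `m ≥ 1`, let `j = ⌊m^{1/d}⌋₊`, so that `j^d ≤ m` and
`m^{1/d} ≤ 2j`. Cutting the cube into `j^d` subcubes of side `2r/j`, the pigeonhole principle puts
`c` of any `c·m` points into one subcube, and that group has diameter at most
`2r/j ≤ 4r·m^{-1/d}`. Extracting such groups repeatedly, the class with bound `4r·k^{-1/d}` is
taken out when `c·k` points remain.
-/

open Function Metric

-- The clamp to `j - 1` puts the right endpoint `u = j` into the last cell.
theorem min_floor_le_and_le_add_one {u : ℝ} {j : ℕ} (hj : 0 < j) (hu0 : 0 ≤ u) (huj : u ≤ j) :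
    ((min (j - 1) ⌊u⌋₊ : ℕ) : ℝ) ≤ u ∧ u ≤ (min (j - 1) ⌊u⌋₊ : ℕ) + 1 := by
  refine ⟨(Nat.cast_le.2 (min_le_right _ _)).trans (Nat.floor_le hu0), ?_⟩
  rcases min_cases (j - 1) ⌊u⌋₊ with ⟨h, -⟩ | ⟨h, -⟩ <;> rw [h]
  · rw [Nat.cast_sub hj, Nat.cast_one, sub_add_cancel]
    exact huj
  · exact (Nat.lt_floor_add_one u).le

theorem exists_cell_index {r : ℝ} (hr : 0 ≤ r) {j : ℕ} (hj : 0 < j) :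
    ∃ f : ℝ → Fin j, ∀ a b, |a| ≤ r → |b| ≤ r → f a = f b → |a - b| ≤ 2 * r / j := by
  rcases hr.eq_or_lt with rfl | hr
  · refine ⟨fun _ => ⟨0, hj⟩, fun a b ha hb _ => ?_⟩
    simp [abs_nonpos_iff.1 ha, abs_nonpos_iff.1 hb]
  set δ := 2 * r / j
  have hδ : 0 < δ := by positivity
  set u : ℝ → ℝ := fun a => (a + r) / δ
  have hu : ∀ a, |a| ≤ r → 0 ≤ u a ∧ u a ≤ j := fun a ha => by
    obtain ⟨h₁, h₂⟩ := abs_le.1 ha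
    refine ⟨div_nonneg (by linarith) hδ.le, (div_le_iff₀ hδ).2 ?_⟩
    have : (j : ℝ) * δ = 2 * r := mul_div_cancel₀ _ (by positivity)
    linarith
  refine ⟨fun a => ⟨min (j - 1) ⌊u a⌋₊, by omega⟩, fun a b ha hb hab => ?_⟩
  have hab : min (j - 1) ⌊u a⌋₊ = min (j - 1) ⌊u b⌋₊ := Fin.mk.inj_iff.1 hab
  obtain ⟨ha₁, ha₂⟩ := min_floor_le_and_le_add_one hj (hu a ha).1 (hu a ha).2
  obtain ⟨hb₁, hb₂⟩ := min_floor_le_and_le_add_one hj (hu b hb).1 (hu b hb).2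
  rw [hab] at ha₁ ha₂
  have huab : |u a - u b| ≤ 1 := abs_sub_le_iff.2 ⟨by linarith, by linarith⟩
  calc |a - b| = |(u a - u b) * δ| := by
        rw [sub_mul, div_mul_cancel₀ _ hδ.ne', div_mul_cancel₀ _ hδ.ne', add_sub_add_right_eq_sub]
    _ = |u a - u b| * δ := by rw [abs_mul, abs_of_pos hδ]
    _ ≤ δ := mul_le_of_le_one_left hδ.le huab

theorem exists_cube_cell_index {ι : Type*} [Fintype ι] {r : ℝ} (hr : 0 ≤ r) {j : ℕ} (hj : 0 < j) :
    ∃ g : (ι → ℝ) → ι → Fin j,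
      ∀ y z, ‖y‖ ≤ r → ‖z‖ ≤ r → g y = g z → dist y z ≤ 2 * r / j := by
  obtain ⟨f, hf⟩ := exists_cell_index hr hj
  refine ⟨fun y t => f (y t), fun y z hy hz hyz => (dist_pi_le_iff (by positivity)).2 fun t => ?_⟩
  exact hf _ _ ((norm_le_pi_norm y t).trans hy) ((norm_le_pi_norm z t).trans hz) (congrFun hyz t)

theorem exists_pow_le_and_inv_le {m : ℕ} (d : ℕ) (hm : 0 < m) :
    ∃ j : ℕ, 0 < j ∧ j ^ d ≤ m ∧ (j : ℝ)⁻¹ ≤ 2 * (m : ℝ) ^ (-(1 : ℝ) / d) := by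
  set s := (m : ℝ) ^ ((1 : ℝ) / d)
  have hm1 : (1 : ℝ) ≤ m := by exact_mod_cast hm
  have hs : 1 ≤ s := Real.one_le_rpow hm1 (by positivity)
  refine ⟨⌊s⌋₊, Nat.floor_pos.2 hs, ?_, ?_⟩
  · -- Equality fails only for `d = 0`, where `1 / d = 0`.
    have hexp : (1 : ℝ) / d * d ≤ 1 := by
      rcases d.eq_zero_or_pos with rfl | hd
      · simp
      · rw [one_div_mul_cancel (by positivity)]
    have : (⌊s⌋₊ : ℝ) ^ d ≤ m := calc
      _ ≤ s ^ d := pow_le_pow_left₀ (Nat.cast_nonneg _) (Nat.floor_le (by linarith)) d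
      _ = (m : ℝ) ^ ((1 : ℝ) / d * d) := by rw [Real.rpow_mul (by positivity), Real.rpow_natCast]
      _ ≤ (m : ℝ) ^ (1 : ℝ) := Real.rpow_le_rpow_of_exponent_le hm1 hexp
      _ = m := Real.rpow_one _
    exact_mod_cast this
  · have hj : (1 : ℝ) ≤ ⌊s⌋₊ := by exact_mod_cast Nat.floor_pos.2 hs
    have hs2 : s ≤ 2 * ⌊s⌋₊ := by linarith [Nat.lt_floor_add_one s]
    rw [neg_div, Real.rpow_neg (by positivity), ← div_eq_mul_inv, inv_eq_one_div,
      div_le_div_iff₀ (by positivity) (by positivity)]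
    linarith

theorem exists_subset_card_eq_diam_le {ι α : Type*} [Fintype ι] {r : ℝ} (hr : 0 ≤ r)
    {x : α → ι → ℝ} (hx : ∀ i, ‖x i‖ ≤ r) {c m : ℕ} (hm : 0 < m) {S : Finset α}
    (hS : c * m ≤ S.card) :
    ∃ T ⊆ S, T.card = c ∧ diam (x '' T) ≤ 4 * r * (m : ℝ) ^ (-(1 : ℝ) / Fintype.card ι) := by
  classical
  obtain ⟨j, hj, hjm, hjinv⟩ := exists_pow_le_and_inv_le (Fintype.card ι) hm
  obtain ⟨g, hg⟩ := exists_cube_cell_index (ι := ι) hr hj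
  have : Nonempty (ι → Fin j) := ⟨fun _ => ⟨0, hj⟩⟩
  have hcells : (Finset.univ : Finset (ι → Fin j)).card * c ≤ S.card := by
    rw [Finset.card_univ, Fintype.card_fun, Fintype.card_fin, mul_comm]
    exact (Nat.mul_le_mul_left c hjm).trans hS
  obtain ⟨y, -, hy⟩ := Finset.exists_le_card_fiber_of_mul_le_card_of_maps_to
    (f := fun i => g (x i)) (fun _ _ => Finset.mem_univ _) Finset.univ_nonempty hcells
  obtain ⟨T, hTy, hTc⟩ := Finset.exists_subset_card_eq hy
  refine ⟨T, hTy.trans (Finset.filter_subset _ _), hTc, diam_le_of_forall_dist_le (by positivity) ?_⟩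
  rintro _ ⟨i, hi, rfl⟩ _ ⟨i', hi', rfl⟩
  have hgi : g (x i) = y := (Finset.mem_filter.1 (hTy hi)).2
  have hgi' : g (x i') = y := (Finset.mem_filter.1 (hTy hi')).2
  calc dist (x i) (x i') ≤ 2 * r / j := hg _ _ (hx i) (hx i') (hgi.trans hgi'.symm)
    _ = 2 * r * (j : ℝ)⁻¹ := div_eq_mul_inv _ _
    _ ≤ 2 * r * (2 * (m : ℝ) ^ (-(1 : ℝ) / Fintype.card ι)) :=
        mul_le_mul_of_nonneg_left hjinv (by positivity)
    _ = 4 * r * (m : ℝ) ^ (-(1 : ℝ) / Fintype.card ι) := by ring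

theorem pairwise_disjoint_snoc {α : Type*} {m : ℕ} {C : Fin m → Finset α} {T : Finset α}
    (hC : Pairwise (Disjoint on C)) (hCT : ∀ k, Disjoint (C k) T) :
    Pairwise (Disjoint on (Fin.snoc C T : Fin (m + 1) → Finset α)) := by
  intro k l hkl
  induction k using Fin.lastCases with
  | last =>
    induction l using Fin.lastCases with
    | last => exact absurd rfl hkl
    | cast l => simpa [onFun] using (hCT l).symm
  | cast k =>
    induction l using Fin.lastCases with
    | last => simpa [onFun] using hCT k
    | cast l => simpa [onFun] using hC (ne_of_apply_ne Fin.castSucc hkl)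

theorem exists_equipartition {α : Type*} [DecidableEq α] (c : ℕ) (P : ℕ → Finset α → Prop)
    (extract : ∀ m (S : Finset α), S.card = c * (m + 1) → ∃ T ⊆ S, T.card = c ∧ P m T)
    (m : ℕ) (S : Finset α) (hS : S.card = c * m) :
    ∃ C : Fin m → Finset α,
      Pairwise (Disjoint on C) ∧ (∀ k, C k ⊆ S) ∧ (∀ i ∈ S, ∃ k, i ∈ C k) ∧
        (∀ k, (C k).card = c) ∧ ∀ k : Fin m, P k (C k) := by
  induction m generalizing S with
  | zero =>
    refine ⟨Fin.elim0, fun k => k.elim0, fun k => k.elim0, fun i hi => ?_, fun k => k.elim0,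
      fun k => k.elim0⟩
    simp_all
  | succ m ih =>
    obtain ⟨T, hTS, hTc, hPT⟩ := extract m S hS
    obtain ⟨C, hdisj, hsub, hcover, hcard, hP⟩ :=
      ih (S \ T) (by rw [Finset.card_sdiff_of_subset hTS, hS, hTc, mul_add_one, Nat.add_sub_cancel])
    refine ⟨Fin.snoc C T, pairwise_disjoint_snoc hdisj fun k => ?_, fun k => ?_, fun i hi => ?_,
      fun k => ?_, fun k => ?_⟩
    · exact Finset.disjoint_of_subset_left (hsub k) Finset.sdiff_disjoint
    · induction k using Fin.lastCases <;> simp_all [(hsub _).trans Finset.sdiff_subset]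
    · by_cases hiT : i ∈ T
      · exact ⟨Fin.last m, by simpa using hiT⟩
      · obtain ⟨k, hk⟩ := hcover i (Finset.mem_sdiff.mpr ⟨hi, hiT⟩)
        exact ⟨k.castSucc, by simpa using hk⟩
    · induction k using Fin.lastCases <;> simp_all
    · induction k using Fin.lastCases <;> simp_all

theorem uniform_classification_general (d c n N : ℕ) (hN : N = c * n) (x : Fin N → (Fin d → ℝ)) (r : ℝ)
    (hr : r = ⨆ i, ‖x i‖) :
    ∃ C : Fin n → Finset (Fin N),
      (∀ k l : Fin n, k ≠ l → Disjoint (C k) (C l)) ∧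
      (∀ i : Fin N, ∃ k, i ∈ C k) ∧
      (∀ k, (C k).card = c) ∧
      (∀ k : Fin n,
        Metric.diam (x '' (C k : Set (Fin N))) ≤ 4 * r * (((k : ℕ) + 1 : ℝ)) ^ (-(1 : ℝ) / d)) := by
  have hxr : ∀ i, ‖x i‖ ≤ r := hr ▸ le_ciSup (Set.finite_range fun i => ‖x i‖).bddAbove
  have hr0 : 0 ≤ r := hr ▸ Real.iSup_nonneg fun i => norm_nonneg _
  obtain ⟨C, hdisj, -, hcover, hcard, hdiam⟩ := exists_equipartition c
    (fun m (T : Finset (Fin N)) => diam (x '' T) ≤ 4 * r * ((m : ℝ) + 1) ^ (-(1 : ℝ) / d))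
    (fun m S hS => by
      obtain ⟨T, hTS, hTc, hT⟩ := exists_subset_card_eq_diam_le hr0 hxr m.succ_pos hS.ge
      rw [Fintype.card_fin, Nat.cast_succ] at hT
      exact ⟨T, hTS, hTc, hT⟩)
    n Finset.univ (by simp [hN])
  exact ⟨C, fun k l hkl => hdisj hkl, fun i => hcover i (Finset.mem_univ i), hcard, hdiam⟩

theorem uniform_classification (d c n N : ℕ) (hd : 1 ≤ d) (hc : 1 ≤ c) (hn : 1 ≤ n)
    (hN : N = c * n) (x : Fin N → (Fin d → ℝ)) (r : ℝ) (hr : r = ⨆ i, ‖x i‖) :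
    ∃ C : Fin n → Finset (Fin N),
      (∀ k l : Fin n, k ≠ l → Disjoint (C k) (C l)) ∧
      (∀ i : Fin N, ∃ k, i ∈ C k) ∧
      (∀ k, (C k).card = c) ∧
      (∀ k : Fin n,
        Metric.diam (x '' (C k : Set (Fin N))) ≤ 4 * r * (((k : ℕ) + 1 : ℝ)) ^ (-(1 : ℝ) / d)) :=
  uniform_classification_general d c n N hN x r hr
end

section
/- Let N = c·n with c, n positive integers, and let x_1,…,x_N ∈ ℝ^d with r = max_i ‖x_i‖. There exist a partition of {1,…,N} into classes C_1,…,C_n of cardinality c each and centers x̄_1,…,x̄_n ∈ ℝ^d such that N^{-1} Σ_{i=1}^N ‖x_i − x̄_{k(i)}‖ ≤ 4r · f_{1,d}(n), where k(i) is the index of the class containing i, and f_{1,d}(n) = (d/(d−1))·n^{-1/d} if d > 1 and f_{1,1}(n) = (1+ln n)/n if d = 1. -/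
open MeasureTheory Metric
open Finset

/-- The real Riemann zeta function `ζ(s) = ∑ k ≥ 1, k ^ (-s)` (for `s > 1`). -/
noncomputable def realZeta (s : ℝ) : ℝ := ∑' k : ℕ, ((k : ℝ) + 1) ^ (-s)

/-- The rate function `f_{p,d}(n)` of Theorem 3.4. -/
noncomputable def fpd (p : ℝ) (d : ℕ) (n : ℕ) : ℝ :=
  if p < d then ((d : ℝ) / (d - p)) ^ ((1 : ℝ) / p) * (n : ℝ) ^ (-(1 : ℝ) / d)
  else if p = d then ((1 + Real.log n) / n) ^ ((1 : ℝ) / d)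
  else realZeta (p / d) * (n : ℝ) ^ (-(1 : ℝ) / p)


lemma sumA (d : ℕ) (hd : 2 ≤ d) (n : ℕ) :
    ∑ k ∈ range n, (((k : ℝ)) + 1) ^ (-(1:ℝ)/d) ≤
      ((d : ℝ) / ((d:ℝ) - 1)) * (n : ℝ) ^ (1 - (1:ℝ)/d) := by
  have hd0 : (0:ℝ) < d := by positivity
  set q : ℝ := 1 - (1:ℝ)/d with hq
  have hq0 : 0 < q := by
    have : (1:ℝ)/d ≤ 1/2 := by
      apply div_le_div_of_nonneg_left (by norm_num) (by norm_num)
      exact_mod_cast hd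
    simp only [hq]; linarith
  have hq1 : q ≤ 1 := by
    have : (0:ℝ) ≤ 1/d := by positivity
    simp only [hq]; linarith
  have key : ∀ k : ℕ, q * (((k:ℝ)) + 1) ^ (-(1:ℝ)/d) ≤ ((k+1:ℕ):ℝ) ^ q - ((k:ℕ):ℝ) ^ q := by
    intro k
    have hk1 : (0:ℝ) < (k:ℝ) + 1 := by positivity
    set a : ℝ := (k:ℝ) + 1 with ha
    set s : ℝ := -(1/a) with hs
    have hs1 : -1 ≤ s := by
      rw [hs, neg_le, neg_neg, div_le_one hk1]; linarith
    have hs0 : 0 ≤ 1 + s := by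
      rw [hs]
      have : 1/a ≤ 1 := by rw [div_le_one hk1]; linarith
      linarith
    have hber : (1 + s) ^ q ≤ 1 + q * s :=
      rpow_one_add_le_one_add_mul_self hs1 hq0.le hq1
    have hfac : ((k:ℝ)) = a * (1 + s) := by
      rw [hs]; field_simp; rw [ha]; ring
    have h2 : ((k:ℝ)) ^ q ≤ a ^ q * (1 + q * s) := by
      calc ((k:ℝ)) ^ q = (a * (1+s)) ^ q := by rw [← hfac]
        _ = a ^ q * (1+s) ^ q := Real.mul_rpow hk1.le hs0
        _ ≤ a ^ q * (1 + q * s) := mul_le_mul_of_nonneg_left hber (Real.rpow_nonneg hk1.le q)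
    have hpow : a ^ (-(1:ℝ)/d) = a ^ q / a := by
      rw [eq_div_iff hk1.ne', ← Real.rpow_add_one hk1.ne']
      congr 1
      rw [hq]; ring
    have h3 : a ^ q * (1 + q * s) = a ^ q - q * a ^ (-(1:ℝ)/d) := by
      rw [hpow, hs]; field_simp; ring
    have := h2.trans_eq h3
    have hcast : ((k+1:ℕ):ℝ) = a := by push_cast [ha]; ring
    rw [hcast]
    linarith
  have tele : ∑ k ∈ range n, (((k+1:ℕ):ℝ) ^ q - ((k:ℕ):ℝ) ^ q) = ((n:ℕ):ℝ) ^ q - ((0:ℕ):ℝ) ^ q :=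
    Finset.sum_range_sub (fun k => ((k:ℕ):ℝ) ^ q) n
  have h0 : ((0:ℕ):ℝ) ^ q = 0 := by
    simp [Real.zero_rpow hq0.ne']
  have hsum : q * ∑ k ∈ range n, (((k : ℝ)) + 1) ^ (-(1:ℝ)/d) ≤ (n:ℝ) ^ q := by
    rw [Finset.mul_sum]
    calc ∑ k ∈ range n, q * (((k:ℝ)) + 1) ^ (-(1:ℝ)/d)
        ≤ ∑ k ∈ range n, (((k+1:ℕ):ℝ) ^ q - ((k:ℕ):ℝ) ^ q) := Finset.sum_le_sum (fun k _ => key k)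
      _ = (n:ℝ) ^ q := by rw [tele, h0, sub_zero]
  have hdq : (d : ℝ) / ((d:ℝ) - 1) = 1 / q := by
    rw [hq]; field_simp
  rw [hdq]
  calc ∑ k ∈ range n, (((k:ℝ)) + 1) ^ (-(1:ℝ)/d) ≤ (n:ℝ)^q / q := by
        rw [le_div_iff₀ hq0, mul_comm]; exact hsum
    _ = 1/q * (n:ℝ) ^ (1 - (1:ℝ)/d) := by rw [hq]; ring

lemma sumB (n : ℕ) : ∑ k ∈ range n, (((k : ℝ)) + 1) ^ (-(1:ℝ)/(1:ℕ)) ≤ 1 + Real.log n := by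
  have : ∑ k ∈ range n, (((k : ℝ)) + 1) ^ (-(1:ℝ)/(1:ℕ)) = ((harmonic n : ℚ) : ℝ) := by
    rw [harmonic]
    push_cast
    refine Finset.sum_congr rfl (fun k _ => ?_)
    norm_num [Real.rpow_neg_one]
  rw [this]
  exact harmonic_le_one_add_log n

lemma floor_window {m : ℕ} (hm : 1 ≤ m) {s : ℝ} (h0 : 0 ≤ s) (h1 : s ≤ m) :
    ((min (m-1) ⌊s⌋₊ : ℕ) : ℝ) ≤ s ∧ s ≤ ((min (m-1) ⌊s⌋₊ : ℕ) : ℝ) + 1 := by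
  constructor
  · calc ((min (m-1) ⌊s⌋₊ : ℕ) : ℝ) ≤ (⌊s⌋₊ : ℝ) := by exact_mod_cast min_le_right _ _
      _ ≤ s := Nat.floor_le h0
  · rcases le_or_gt ⌊s⌋₊ (m-1) with h | h
    · have : min (m-1) ⌊s⌋₊ = ⌊s⌋₊ := min_eq_right h
      rw [this]
      exact (Nat.lt_floor_add_one s).le
    · have : min (m-1) ⌊s⌋₊ = m-1 := min_eq_left h.le
      rw [this]
      have : ((m-1 : ℕ) : ℝ) + 1 = (m : ℝ) := by
        have : (1:ℕ) ≤ m := hm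
        push_cast [Nat.cast_sub this]
        ring
      rw [this]; exact h1

lemma coord_bound {m : ℕ} (hm : 1 ≤ m) {r u v : ℝ} (hr : 0 < r)
    (hu : |u| ≤ r) (hv : |v| ≤ r)
    (h : min (m-1) ⌊(u + r) * m / (2*r)⌋₊ = min (m-1) ⌊(v + r) * m / (2*r)⌋₊) :
    |u - v| ≤ 2 * r / m := by
  have hm0 : (0:ℝ) < m := by exact_mod_cast hm
  have hsu : 0 ≤ (u + r) * m / (2*r) := by
    have : 0 ≤ u + r := by cases abs_le.mp hu; linarith
    positivity
  have hsu' : (u + r) * m / (2*r) ≤ m := by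
    rw [div_le_iff₀ (by positivity)]
    have : u + r ≤ 2*r := by cases abs_le.mp hu; linarith
    nlinarith
  have hsv : 0 ≤ (v + r) * m / (2*r) := by
    have : 0 ≤ v + r := by cases abs_le.mp hv; linarith
    positivity
  have hsv' : (v + r) * m / (2*r) ≤ m := by
    rw [div_le_iff₀ (by positivity)]
    have : v + r ≤ 2*r := by cases abs_le.mp hv; linarith
    nlinarith
  obtain ⟨hu1, hu2⟩ := floor_window hm hsu hsu'
  obtain ⟨hv1, hv2⟩ := floor_window hm hsv hsv'
  rw [h] at hu1 hu2
  have hdiff : |(u + r) * m / (2*r) - (v + r) * m / (2*r)| ≤ 1 := by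
    rw [abs_le]; constructor <;> linarith
  have heq : (u + r) * m / (2*r) - (v + r) * m / (2*r) = (u - v) * (m / (2*r)) := by
    field_simp; ring
  rw [heq, abs_mul, abs_of_pos (by positivity : (0:ℝ) < m / (2*r))] at hdiff
  have h2 : |u - v| ≤ 1 / ((m:ℝ)/(2*r)) := (le_div_iff₀ (by positivity)).mpr hdiff
  calc |u - v| ≤ 1 / ((m:ℝ)/(2*r)) := h2
    _ = 2*r/m := one_div_div _ _

lemma build (d c : ℕ) (hd : 1 ≤ d) (hc : 1 ≤ c) {N : ℕ} (x : Fin N → Fin d → ℝ) (r : ℝ)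
    (hr0 : 0 ≤ r) :
    ∀ n : ℕ, ∀ S : Finset (Fin N), S.card = c * n → (∀ i ∈ S, ‖x i‖ ≤ r) →
    ∃ C : Fin n → Finset (Fin N),
      (∀ k, C k ⊆ S) ∧ (∀ k, (C k).card = c) ∧
      (∀ k l, k ≠ l → Disjoint (C k) (C l)) ∧
      (∀ i ∈ S, ∃ k, i ∈ C k) ∧
      (∀ k, ∀ i ∈ C k, ∀ j ∈ C k, ‖x i - x j‖ ≤ 4 * r * (((k : Fin n) : ℝ) + 1) ^ (-(1:ℝ)/d)) := by
  intro n
  induction n with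
  | zero =>
    intro S hS hSr
    refine ⟨fun k => k.elim0, fun k => k.elim0, fun k => k.elim0, fun k l h => k.elim0, ?_, fun k => k.elim0⟩
    intro i hi
    rw [Nat.mul_zero, Finset.card_eq_zero] at hS
    simp [hS] at hi
  | succ n ih =>
    intro S hS hSr
    -- choose grid size m
    set m : ℕ := Nat.findGreatest (fun m => m^d ≤ n+1) (n+1) with hmdef
    have hm1 : 1 ≤ m := Nat.le_findGreatest (by omega) (by simpa using Nat.one_le_iff_ne_zero.mp (by omega))
    have hmd : m^d ≤ n+1 := Nat.findGreatest_spec (P := fun m => m^d ≤ n+1) (m := 1) (by omega) (by simpa)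
    have h2m : n+1 ≤ (2*m)^d := by
      rcases le_or_gt (n+1) m with h | h
      · calc n+1 ≤ m := h
          _ ≤ 2*m := by omega
          _ ≤ (2*m)^d := Nat.le_self_pow (by omega) _
      · have hgr : ¬ ((m+1)^d ≤ n+1) := by
          have h1 : Nat.findGreatest (fun m => m^d ≤ n+1) (n+1) < m+1 := by omega
          exact Nat.findGreatest_is_greatest (P := fun m => m^d ≤ n+1) h1 (by omega)
        calc n+1 ≤ (m+1)^d := by omega
          _ ≤ (2*m)^d := Nat.pow_le_pow_left (by omega) _
    -- pigeonhole on grid cells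
    have hmpos : 0 < m := hm1
    set cell : Fin N → (Fin d → Fin m) :=
      fun i j => ⟨min (m-1) ⌊(x i j + r) * m / (2*r)⌋₊, by omega⟩ with hcell
    have hcardle : (Finset.univ : Finset (Fin d → Fin m)).card * c ≤ S.card := by
      rw [Finset.card_univ, hS]
      simp only [Fintype.card_fun, Fintype.card_fin]
      calc m^d * c ≤ (n+1) * c := Nat.mul_le_mul_right c hmd
        _ = c * (n+1) := Nat.mul_comm _ _
    haveI : Nonempty (Fin m) := ⟨⟨0, hmpos⟩⟩
    obtain ⟨y, -, hy⟩ := Finset.exists_le_card_fiber_of_mul_le_card_of_maps_to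
      (f := cell) (s := S) (t := Finset.univ) (fun a _ => Finset.mem_univ _)
      Finset.univ_nonempty hcardle
    obtain ⟨T, hTsub, hTcard⟩ := Finset.exists_subset_card_eq hy
    have hTS : T ⊆ S := hTsub.trans (Finset.filter_subset _ _)
    -- diameter of T
    have hdiam : ∀ i ∈ T, ∀ j ∈ T, ‖x i - x j‖ ≤ 4 * r * (((n:ℝ)) + 1) ^ (-(1:ℝ)/d) := by
      intro i hi j hj
      have hci : cell i = y := (Finset.mem_filter.mp (hTsub hi)).2
      have hcj : cell j = y := (Finset.mem_filter.mp (hTsub hj)).2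
      have hxi : ‖x i‖ ≤ r := hSr i (hTS hi)
      have hxj : ‖x j‖ ≤ r := hSr j (hTS hj)
      have step1 : ‖x i - x j‖ ≤ 2 * r / m := by
        rcases eq_or_lt_of_le hr0 with h0 | hrpos
        · have h1 : x i = 0 := by
            have := hxi; rw [← h0] at this
            exact norm_le_zero_iff.mp this
          have h2 : x j = 0 := by
            have := hxj; rw [← h0] at this
            exact norm_le_zero_iff.mp this
          rw [h1, h2, sub_zero, norm_zero, ← h0]
          positivity
        · rw [show x i - x j = fun jj => x i jj - x j jj from rfl]
          refine (pi_norm_le_iff_of_nonneg (by positivity)).mpr (fun jj => ?_)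
          have hcoord : (cell i jj : ℕ) = (cell j jj : ℕ) := by rw [hci, hcj]
          simp only [hcell] at hcoord
          have hui : |x i jj| ≤ r := by
            calc |x i jj| = ‖x i jj‖ := (Real.norm_eq_abs _).symm
              _ ≤ ‖x i‖ := norm_le_pi_norm (x i) jj
              _ ≤ r := hxi
          have huj : |x j jj| ≤ r := by
            calc |x j jj| = ‖x j jj‖ := (Real.norm_eq_abs _).symm
              _ ≤ ‖x j‖ := norm_le_pi_norm (x j) jj
              _ ≤ r := hxj
          have := coord_bound hm1 hrpos hui huj hcoord
          simpa [Real.norm_eq_abs] using this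
      refine step1.trans ?_
      -- 2r/m ≤ 4r (n+1)^{-1/d}
      have hd0 : (0:ℝ) < d := by positivity
      have hn1 : (0:ℝ) < (n:ℝ) + 1 := by positivity
      have hmr : (0:ℝ) < m := by exact_mod_cast hmpos
      have hroot : ((n:ℝ) + 1) ^ ((1:ℝ)/d) ≤ 2*m := by
        have hcast : ((n:ℝ) + 1) ≤ ((2*m : ℕ):ℝ)^(d:ℕ) := by exact_mod_cast h2m
        calc ((n:ℝ) + 1) ^ ((1:ℝ)/d) ≤ (((2*m : ℕ):ℝ)^(d:ℕ)) ^ ((1:ℝ)/d) :=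
              Real.rpow_le_rpow hn1.le hcast (by positivity)
          _ = ((2*m : ℕ):ℝ) := by
              rw [← Real.rpow_natCast ((2*m : ℕ):ℝ) d, ← Real.rpow_mul (by positivity)]
              rw [mul_one_div, div_self hd0.ne', Real.rpow_one]
          _ = 2*m := by push_cast; ring
      have hpos : (0:ℝ) < ((n:ℝ) + 1) ^ ((1:ℝ)/d) := Real.rpow_pos_of_pos hn1 _
      have : 4 * r * (((n:ℝ)) + 1) ^ (-(1:ℝ)/d) = 4*r / (((n:ℝ) + 1) ^ ((1:ℝ)/d)) := by
        rw [neg_div, Real.rpow_neg hn1.le]; ring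
      rw [this]
      calc 2*r/m = 4*r/(2*m) := by field_simp; ring
        _ ≤ 4*r / (((n:ℝ) + 1) ^ ((1:ℝ)/d)) :=
            div_le_div_of_nonneg_left (by linarith) hpos hroot
    -- recurse
    have hS' : (S \ T).card = c * n := by
      rw [Finset.card_sdiff_of_subset hTS, hS, hTcard]
      have : c * (n+1) = c * n + c := by ring
      omega
    obtain ⟨C', hC'sub, hC'card, hC'disj, hC'cov, hC'diam⟩ :=
      ih (S \ T) hS' (fun i hi => hSr i (Finset.mem_sdiff.mp hi).1)
    refine ⟨fun k => Fin.lastCases T C' k, ?_, ?_, ?_, ?_, ?_⟩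
    · intro k
      induction k using Fin.lastCases with
      | last => simpa using hTS
      | cast j => simpa using (hC'sub j).trans (Finset.sdiff_subset)
    · intro k
      induction k using Fin.lastCases with
      | last => simpa using hTcard
      | cast j => simpa using hC'card j
    · intro k l hkl
      induction k using Fin.lastCases with
      | last =>
        induction l using Fin.lastCases with
        | last => exact absurd rfl hkl
        | cast j =>
          simp only [Fin.lastCases_last, Fin.lastCases_castSucc]
          exact Finset.disjoint_of_subset_right (hC'sub j) Finset.sdiff_disjoint.symm
      | cast j =>
        induction l using Fin.lastCases with
        | last =>
          simp only [Fin.lastCases_last, Fin.lastCases_castSucc]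
          exact Finset.disjoint_of_subset_left (hC'sub j) Finset.sdiff_disjoint
        | cast j' =>
          simp only [Fin.lastCases_castSucc]
          exact hC'disj j j' (fun h => hkl (by rw [h]))
    · intro i hi
      by_cases hiT : i ∈ T
      · exact ⟨Fin.last n, by simpa using hiT⟩
      · obtain ⟨k, hk⟩ := hC'cov i (Finset.mem_sdiff.mpr ⟨hi, hiT⟩)
        exact ⟨k.castSucc, by simpa using hk⟩
    · intro k
      induction k using Fin.lastCases with
      | last =>
        intro i hi j hj
        simp only [Fin.lastCases_last] at hi hj
        have := hdiam i hi j hj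
        simpa [Fin.val_last] using this
      | cast jj =>
        intro i hi j hj
        simp only [Fin.lastCases_castSucc] at hi hj
        have := hC'diam jj i hi j hj
        simpa [Fin.coe_castSucc] using this
theorem uniform_classification_mean_bound (d c n N : ℕ) (hd : 1 ≤ d) (hc : 1 ≤ c) (hn : 1 ≤ n)
    (hN : N = c * n) (x : Fin N → (Fin d → ℝ)) (r : ℝ) (hr : r = ⨆ i, ‖x i‖) :
    ∃ (C : Fin n → Finset (Fin N)) (xbar : Fin n → (Fin d → ℝ)) (κ : Fin N → Fin n),
      (∀ k l : Fin n, k ≠ l → Disjoint (C k) (C l)) ∧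
      (∀ i : Fin N, i ∈ C (κ i)) ∧
      (∀ k, (C k).card = c) ∧
      (N : ℝ)⁻¹ * ∑ i, ‖x i - xbar (κ i)‖ ≤ 4 * r * fpd 1 d n := by
  have hN0 : 0 < N := hN ▸ Nat.mul_pos hc hn
  haveI : Nonempty (Fin N) := ⟨⟨0, hN0⟩⟩
  have hrle : ∀ i, ‖x i‖ ≤ r := fun i => hr ▸ le_ciSup (f := fun i => ‖x i‖) (Set.Finite.bddAbove (Set.finite_range _)) i
  have hr0 : 0 ≤ r := le_trans (norm_nonneg _) (hrle (Classical.arbitrary _))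
  obtain ⟨C, hCsub, hCcard, hCdisj, hCcov, hCdiam⟩ :=
    build d c hd hc x r hr0 n Finset.univ (by rw [Finset.card_univ, Fintype.card_fin, hN])
      (fun i _ => hrle i)
  have hCne : ∀ k, (C k).Nonempty := fun k =>
    Finset.card_pos.mp (by rw [hCcard k]; omega)
  set xbar : Fin n → (Fin d → ℝ) := fun k => x (hCne k).choose with hxbar
  have hκex : ∀ i : Fin N, ∃ k, i ∈ C k := fun i => hCcov i (Finset.mem_univ i)
  set κ : Fin N → Fin n := fun i => (hκex i).choose with hκdef
  have hκ : ∀ i, i ∈ C (κ i) := fun i => (hκex i).choose_spec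
  refine ⟨C, xbar, κ, hCdisj, hκ, hCcard, ?_⟩
  have hfib : ∀ k, Finset.univ.filter (fun i => κ i = k) = C k := by
    intro k
    ext i
    simp only [Finset.mem_filter, Finset.mem_univ, true_and]
    constructor
    · rintro rfl; exact hκ i
    · intro hi
      by_contra hne
      exact Finset.disjoint_left.mp (hCdisj _ _ hne) (hκ i) hi
  have hbound : ∀ i : Fin N, ‖x i - xbar (κ i)‖ ≤ 4 * r * (((κ i : ℕ) : ℝ) + 1) ^ (-(1:ℝ)/d) :=
    fun i => hCdiam (κ i) i (hκ i) _ (hCne (κ i)).choose_spec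
  set Sn : ℝ := ∑ k ∈ Finset.range n, (((k : ℝ)) + 1) ^ (-(1:ℝ)/d) with hSn
  have hmain : ∑ i, ‖x i - xbar (κ i)‖ ≤ (c : ℝ) * (4 * r) * Sn := by
    calc ∑ i, ‖x i - xbar (κ i)‖
        ≤ ∑ i, 4 * r * (((κ i : ℕ) : ℝ) + 1) ^ (-(1:ℝ)/d) :=
          Finset.sum_le_sum (fun i _ => hbound i)
      _ = ∑ k : Fin n, ∑ i ∈ Finset.univ.filter (fun i => κ i = k),
            4 * r * (((κ i : ℕ) : ℝ) + 1) ^ (-(1:ℝ)/d) :=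
          (Finset.sum_fiberwise Finset.univ κ _).symm
      _ = ∑ k : Fin n, (c : ℝ) * (4 * r * (((k : ℕ) : ℝ) + 1) ^ (-(1:ℝ)/d)) := by
          refine Finset.sum_congr rfl (fun k _ => ?_)
          rw [Finset.sum_congr rfl (fun i hi => by
            rw [(Finset.mem_filter.mp hi).2]), Finset.sum_const, hfib k, hCcard k,
            nsmul_eq_mul]
      _ = (c : ℝ) * (4 * r) * Sn := by
          rw [hSn, ← Finset.mul_sum, Finset.mul_sum, ← Fin.sum_univ_eq_sum_range
            (fun k => (((k : ℕ) : ℝ) + 1) ^ (-(1:ℝ)/d)) n, Finset.mul_sum]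
          exact Finset.sum_congr rfl (fun k _ => by ring)
  have hc0 : (0:ℝ) < c := by exact_mod_cast hc
  have hn0 : (0:ℝ) < n := by exact_mod_cast hn
  have hNval : (N:ℝ) = (c:ℝ) * n := by rw [hN]; push_cast; ring
  have hstep : (N : ℝ)⁻¹ * ∑ i, ‖x i - xbar (κ i)‖ ≤ 4 * r * (Sn / n) := by
    rw [hNval]
    calc ((c:ℝ) * n)⁻¹ * ∑ i, ‖x i - xbar (κ i)‖
        ≤ ((c:ℝ) * n)⁻¹ * ((c : ℝ) * (4 * r) * Sn) := by
          apply mul_le_mul_of_nonneg_left hmain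
          positivity
      _ = 4 * r * (Sn / n) := by field_simp
  refine hstep.trans ?_
  rcases eq_or_lt_of_le hd with hd1 | hd2
  · -- d = 1
    have hd1' : d = 1 := hd1.symm
    subst hd1'
    have : fpd 1 1 n = (1 + Real.log n) / n := by
      rw [fpd]
      norm_num
    rw [this]
    have hsum := sumB n
    have : Sn ≤ 1 + Real.log n := by rw [hSn]; exact_mod_cast hsum
    have hlog : (0:ℝ) ≤ Real.log n := Real.log_nonneg (by exact_mod_cast hn)
    apply mul_le_mul_of_nonneg_left _ (by positivity : (0:ℝ) ≤ 4 * r)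
    rw [div_le_div_iff₀ hn0 hn0]
    nlinarith
  · -- d ≥ 2
    have hd2' : 2 ≤ d := hd2
    have : fpd 1 d n = ((d : ℝ) / ((d:ℝ) - 1)) * (n : ℝ) ^ (-(1:ℝ)/d) := by
      rw [fpd]
      have h1d : (1:ℝ) < (d:ℝ) := by exact_mod_cast hd2
      rw [if_pos h1d]
      norm_num
    rw [this]
    have hsum := sumA d hd2' n
    have hSle : Sn ≤ ((d : ℝ) / ((d:ℝ) - 1)) * (n : ℝ) ^ (1 - (1:ℝ)/d) := hSn ▸ hsum
    have hrpow : (n : ℝ) ^ (1 - (1:ℝ)/d) / n = (n : ℝ) ^ (-(1:ℝ)/d) := by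
      rw [div_eq_iff hn0.ne', ← Real.rpow_add_one hn0.ne']
      congr 1
      ring
    have h1d : (1:ℝ) < (d:ℝ) := by exact_mod_cast hd2
    have hD0 : (0:ℝ) ≤ (d : ℝ) / ((d:ℝ) - 1) := div_nonneg (by positivity) (by linarith)
    calc 4 * r * (Sn / n)
        ≤ 4 * r * ((((d : ℝ) / ((d:ℝ) - 1)) * (n : ℝ) ^ (1 - (1:ℝ)/d)) / n) := by
          apply mul_le_mul_of_nonneg_left _ (by positivity : (0:ℝ) ≤ 4 * r)
          exact div_le_div_of_nonneg_right hSle hn0.le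
      _ = 4 * r * (((d : ℝ) / ((d:ℝ) - 1)) * (n : ℝ) ^ (-(1:ℝ)/d)) := by
          rw [mul_div_assoc, hrpow]
end
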